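/- arXiv:1908.00695 — 5 statements merged into one kernel-verified Lean document; each statement's English description precedes it below -/
import Mathlib

section
/- Let D ⊂ ℝ^r be a bounded set and β ≥ 1. If f ∈ C_r^β(D) maps to ℝ^q and g ∈ C_q^β(ℝ^q), then the composition g ∘ f belongs to C_r^β(D). -/
/-!
At `a ∈ D` approximate `g` near `f a` by its polynomial `Q = Q_{f a}` and each component of `f`
near `a` by `P_a`. Since `β ≥ 1` and `D` is bounded, `f` is Lipschitz on `D`, so
`g (f x) - Q (f x) = O(‖f x - f a‖ ^ β) = O(‖x - a‖ ^ β)`; and `Q` is Lipschitz, uniformly in `a`,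
on the bounded set where `f` and `P_a` take their values, so `Q (f x) - Q (P_a x) = O(‖x - a‖ ^ β)`.
The composite `Q ∘ P_a` has too large a degree: re-expanding it in powers of `x - a` and dropping
the monomials of degree `≥ ⌈β⌉` costs `O(‖x - a‖ ^ ⌈β⌉) = O(‖x - a‖ ^ β)` on the bounded set `D`.
All constants are uniform in `a` because the `ℓ¹` norm of the coefficients is submultiplicative
and controls the values of a polynomial of bounded degree on bounded sets.
-/

open Finset

/-- The generalized Hölder class `C_r^β(D, K)`: functions admitting at every `a ∈ D` a
polynomial approximation `P_a` of degree strictly smaller than `β`, with error at most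
`K |x − a|_∞^β` and coefficients bounded by `γ! |c_{γ,a}| ≤ K` uniformly over `a`. -/
noncomputable def CHolder (r : ℕ) (β : ℝ) (D : Set (Fin r → ℝ)) (K : ℝ) :
    Set ((Fin r → ℝ) → ℝ) :=
  {f | ∃ P : (Fin r → ℝ) → MvPolynomial (Fin r) ℝ,
    (∀ a ∈ D, ∀ γ ∈ (P a).support, ((∑ i, γ i : ℕ) : ℝ) < β) ∧
    (∀ a ∈ D, ∀ x ∈ D, |f x - MvPolynomial.eval x (P a)| ≤ K * ‖x - a‖ ^ β) ∧
    (∀ a ∈ D, ∀ γ : Fin r →₀ ℕ,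
      ((∏ i, Nat.factorial (γ i) : ℕ) : ℝ) * |MvPolynomial.coeff γ (P a)| ≤ K)}

/-- `C_r^β(D) = ⋃_{K > 0} C_r^β(D, K)`. -/
noncomputable def CHolderU (r : ℕ) (β : ℝ) (D : Set (Fin r → ℝ)) :
    Set ((Fin r → ℝ) → ℝ) := ⋃ K ∈ Set.Ioi (0 : ℝ), CHolder r β D K

theorem rpow_le_rpow_sub_mul_rpow {t R β γ : ℝ} (ht : 0 ≤ t) (htR : t ≤ R) (hβ : 0 ≤ β)
    (hβγ : β ≤ γ) : t ^ γ ≤ R ^ (γ - β) * t ^ β := calc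
  t ^ γ = t ^ (γ - β) * t ^ β := by
    rw [← Real.rpow_add_of_nonneg ht (sub_nonneg.2 hβγ) hβ, sub_add_cancel]
  _ ≤ R ^ (γ - β) * t ^ β := mul_le_mul_of_nonneg_right
    (Real.rpow_le_rpow ht htR (sub_nonneg.2 hβγ)) (Real.rpow_nonneg ht _)

namespace MvPolynomial

section CommSemiring

variable {R σ τ : Type*} [CommSemiring R]

theorem eval_aeval (x : τ → R) (s : σ → MvPolynomial τ R) (p : MvPolynomial σ R) :
    eval x (aeval s p) = eval (fun i => eval x (s i)) p := by
  rw [aeval_eq_bind₁]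
  exact eval₂Hom_bind₁ _ _ _ _

theorem totalDegree_aeval_le {s : σ → MvPolynomial τ R} {k N : ℕ}
    (hs : ∀ i, (s i).totalDegree ≤ k) {p : MvPolynomial σ R} (hp : p.totalDegree ≤ N) :
    (aeval s p).totalDegree ≤ N * k := by
  conv_lhs => rw [p.as_sum, map_sum]
  refine (totalDegree_finsetSum _ _).trans (Finset.sup_le fun γ hγ => ?_)
  rw [aeval_monomial, algebraMap_eq]
  refine (totalDegree_mul _ _).trans ?_
  rw [totalDegree_C, zero_add]
  calc _ ≤ ∑ i ∈ γ.support, (s i ^ γ i).totalDegree := totalDegree_finsetProd _ _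
    _ ≤ ∑ i ∈ γ.support, γ i * k :=
      sum_le_sum fun i _ => (totalDegree_pow _ _).trans (Nat.mul_le_mul_left _ (hs i))
    _ = γ.degree * k := (sum_mul ..).symm
    _ ≤ N * k := Nat.mul_le_mul_right _ ((le_totalDegree hγ).trans hp)

noncomputable def truncTotalDegree (m : ℕ) (p : MvPolynomial σ R) : MvPolynomial σ R :=
  ∑ γ ∈ p.support with γ.degree < m, monomial γ (coeff γ p)

theorem totalDegree_truncTotalDegree_lt {m : ℕ} (hm : 0 < m) (p : MvPolynomial σ R) :
    (truncTotalDegree m p).totalDegree < m :=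
  (totalDegree_finsetSum _ _).trans_lt <| (Finset.sup_lt_iff hm).2 fun _ hγ =>
    (totalDegree_monomial_le _ _).trans_lt (mem_filter.1 hγ).2

theorem totalDegree_truncTotalDegree_le (m : ℕ) (p : MvPolynomial σ R) :
    (truncTotalDegree m p).totalDegree ≤ p.totalDegree :=
  (totalDegree_finsetSum _ _).trans <| Finset.sup_le fun _ hγ =>
    (totalDegree_monomial_le _ _).trans (le_totalDegree (mem_filter.1 hγ).1)

noncomputable def translate (c : σ → R) (p : MvPolynomial σ R) : MvPolynomial σ R :=
  aeval (fun i => X i + C (c i)) p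

theorem eval_translate (c x : σ → R) (p : MvPolynomial σ R) :
    eval x (translate c p) = eval (x + c) p := by
  simp only [translate, eval_aeval, map_add, eval_X, eval_C]
  rfl

theorem totalDegree_translate_le (c : σ → R) (p : MvPolynomial σ R) :
    (translate c p).totalDegree ≤ p.totalDegree := by
  refine (totalDegree_aeval_le (k := 1) (fun i => ?_) le_rfl).trans_eq (mul_one _)
  exact (totalDegree_add _ _).trans
    (max_le ((totalDegree_monomial_le _ _).trans (by simp)) (by simp))

end CommSemiring

section CommRing

variable {R σ : Type*} [CommRing R]

theorem sub_truncTotalDegree (m : ℕ) (p : MvPolynomial σ R) :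
    p - truncTotalDegree m p = ∑ γ ∈ p.support with ¬γ.degree < m, monomial γ (coeff γ p) := by
  rw [truncTotalDegree, sub_eq_iff_eq_add, sum_filter_not_add_sum_filter]
  exact p.as_sum

noncomputable def taylorTrunc (m : ℕ) (a : σ → R) (p : MvPolynomial σ R) : MvPolynomial σ R :=
  translate (-a) (truncTotalDegree m (translate a p))

theorem eval_taylorTrunc (m : ℕ) (a x : σ → R) (p : MvPolynomial σ R) :
    eval x (taylorTrunc m a p) = eval (x - a) (truncTotalDegree m (translate a p)) := by
  rw [taylorTrunc, eval_translate, sub_eq_add_neg]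

theorem totalDegree_taylorTrunc_lt {m : ℕ} (hm : 0 < m) (a : σ → R)
    (p : MvPolynomial σ R) : (taylorTrunc m a p).totalDegree < m :=
  (totalDegree_translate_le _ _).trans_lt (totalDegree_truncTotalDegree_lt hm _)

end CommRing

section L1Norm

variable {σ τ : Type*}

noncomputable def l1Norm (p : MvPolynomial σ ℝ) : ℝ :=
  ∑ γ ∈ p.support, |coeff γ p|

theorem l1Norm_nonneg (p : MvPolynomial σ ℝ) : 0 ≤ l1Norm p :=
  sum_nonneg fun _ _ => abs_nonneg _

theorem l1Norm_eq_sum_of_support_subset {p : MvPolynomial σ ℝ} {s : Finset (σ →₀ ℕ)}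
    (h : p.support ⊆ s) : l1Norm p = ∑ γ ∈ s, |coeff γ p| :=
  sum_subset h fun γ _ hγ => by rw [notMem_support_iff.mp hγ, abs_zero]

theorem abs_coeff_le_l1Norm (p : MvPolynomial σ ℝ) (γ : σ →₀ ℕ) : |coeff γ p| ≤ l1Norm p := by
  by_cases h : γ ∈ p.support
  · exact single_le_sum (f := fun γ => |coeff γ p|) (fun _ _ => abs_nonneg _) h
  · rw [notMem_support_iff.mp h, abs_zero]
    exact l1Norm_nonneg p

theorem l1Norm_le_card_mul {p : MvPolynomial σ ℝ} {s : Finset (σ →₀ ℕ)} {K : ℝ}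
    (hs : p.support ⊆ s) (hK : ∀ γ, |coeff γ p| ≤ K) : l1Norm p ≤ #s * K := by
  rw [l1Norm_eq_sum_of_support_subset hs, ← nsmul_eq_mul, ← sum_const]
  exact sum_le_sum fun γ _ => hK γ

theorem l1Norm_add_le (p q : MvPolynomial σ ℝ) : l1Norm (p + q) ≤ l1Norm p + l1Norm q := by
  classical
  rw [l1Norm_eq_sum_of_support_subset support_add,
    l1Norm_eq_sum_of_support_subset (subset_union_left (s₂ := q.support)),
    l1Norm_eq_sum_of_support_subset (subset_union_right (s₁ := p.support)), ← sum_add_distrib]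
  exact sum_le_sum fun γ _ => by simpa only [coeff_add] using abs_add_le _ _

theorem l1Norm_sum_le {ι : Type*} (s : Finset ι) (f : ι → MvPolynomial σ ℝ) :
    l1Norm (∑ i ∈ s, f i) ≤ ∑ i ∈ s, l1Norm (f i) :=
  le_sum_of_subadditive _ (by simp [l1Norm]) l1Norm_add_le s f

theorem l1Norm_monomial (γ : σ →₀ ℕ) (c : ℝ) : l1Norm (monomial γ c) = |c| := by
  classical
  rw [l1Norm_eq_sum_of_support_subset support_monomial_subset, sum_singleton, coeff_monomial,
    if_pos rfl]

theorem l1Norm_C (c : ℝ) : l1Norm (C c : MvPolynomial σ ℝ) = |c| :=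
  l1Norm_monomial 0 c

theorem l1Norm_X (i : σ) : l1Norm (X i : MvPolynomial σ ℝ) = 1 := by
  rw [X, l1Norm_monomial, abs_one]

theorem l1Norm_mul_le (p q : MvPolynomial σ ℝ) : l1Norm (p * q) ≤ l1Norm p * l1Norm q := by
  conv_lhs => rw [p.as_sum, q.as_sum, sum_mul_sum]
  conv_rhs => rw [l1Norm, l1Norm, sum_mul_sum]
  refine (l1Norm_sum_le _ _).trans (sum_le_sum fun δ _ =>
    (l1Norm_sum_le _ _).trans (sum_le_sum fun γ _ => ?_))
  rw [monomial_mul, l1Norm_monomial, abs_mul]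

theorem l1Norm_prod_le {ι : Type*} (s : Finset ι) (f : ι → MvPolynomial σ ℝ) :
    l1Norm (∏ i ∈ s, f i) ≤ ∏ i ∈ s, l1Norm (f i) := by
  classical
  induction s using Finset.induction_on with
  | empty => rw [prod_empty, prod_empty, ← C_1, l1Norm_C, abs_one]
  | insert a s ha ih =>
    rw [prod_insert ha, prod_insert ha]
    exact (l1Norm_mul_le _ _).trans (mul_le_mul_of_nonneg_left ih (l1Norm_nonneg _))

theorem l1Norm_pow_le (p : MvPolynomial σ ℝ) (k : ℕ) : l1Norm (p ^ k) ≤ l1Norm p ^ k := by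
  simpa using l1Norm_prod_le (range k) fun _ => p

theorem l1Norm_aeval_le {s : σ → MvPolynomial τ ℝ} {c : ℝ} {N : ℕ} (hs : ∀ i, l1Norm (s i) ≤ c)
    (hc : 1 ≤ c) {p : MvPolynomial σ ℝ} (hp : p.totalDegree ≤ N) :
    l1Norm (aeval s p) ≤ l1Norm p * c ^ N := by
  conv_lhs => rw [p.as_sum, map_sum]
  conv_rhs => rw [l1Norm, sum_mul]
  refine (l1Norm_sum_le _ _).trans (sum_le_sum fun γ hγ => ?_)
  have hprod : l1Norm (γ.prod fun i k => s i ^ k) ≤ c ^ N := calc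
    _ ≤ ∏ i ∈ γ.support, l1Norm (s i) ^ γ i := (l1Norm_prod_le _ _).trans
        (prod_le_prod (fun _ _ => l1Norm_nonneg _) fun i _ => l1Norm_pow_le _ _)
    _ ≤ ∏ i ∈ γ.support, c ^ γ i := prod_le_prod (fun _ _ => pow_nonneg (l1Norm_nonneg _) _)
        fun i _ => pow_le_pow_left₀ (l1Norm_nonneg _) (hs i) _
    _ = c ^ γ.degree := prod_pow_eq_pow_sum _ _ _
    _ ≤ c ^ N := pow_le_pow_right₀ hc ((le_totalDegree hγ).trans hp)
  rw [aeval_monomial, algebraMap_eq]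
  refine (l1Norm_mul_le _ _).trans ?_
  rw [l1Norm_C]
  exact mul_le_mul_of_nonneg_left hprod (abs_nonneg _)

theorem l1Norm_truncTotalDegree_le (m : ℕ) (p : MvPolynomial σ ℝ) :
    l1Norm (truncTotalDegree m p) ≤ l1Norm p := by
  refine (l1Norm_sum_le _ _).trans ?_
  simp only [l1Norm_monomial]
  exact sum_le_sum_of_subset_of_nonneg (filter_subset _ _) fun _ _ _ => abs_nonneg _

end L1Norm

section Estimates

variable {σ : Type*} [Fintype σ]

theorem support_subset_Iic_of_totalDegree_le [DecidableEq σ] {p : MvPolynomial σ ℝ} {N : ℕ}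
    (hp : p.totalDegree ≤ N) : p.support ⊆ Iic (Finsupp.equivFunOnFinite.symm fun _ => N) :=
  fun γ hγ => mem_Iic.2 <| Finsupp.le_def.2 fun i => by
    simpa using (γ.le_degree i).trans ((le_totalDegree hγ).trans hp)

theorem abs_eval_monomial_le (x : σ → ℝ) (γ : σ →₀ ℕ) (c : ℝ) :
    |eval x (monomial γ c)| ≤ |c| * ‖x‖ ^ γ.degree := by
  rw [eval_monomial, abs_mul, Finsupp.prod, abs_prod]
  refine mul_le_mul_of_nonneg_left ?_ (abs_nonneg _)
  calc ∏ i ∈ γ.support, |x i ^ γ i| ≤ ∏ i ∈ γ.support, ‖x‖ ^ γ i :=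
        prod_le_prod (fun _ _ => abs_nonneg _) fun i _ => by
          rw [abs_pow, ← Real.norm_eq_abs]
          exact pow_le_pow_left₀ (norm_nonneg _) (norm_le_pi_norm x i) _
    _ = ‖x‖ ^ γ.degree := prod_pow_eq_pow_sum _ _ _

theorem abs_eval_le {x : σ → ℝ} {M : ℝ} {N : ℕ} (hx : ‖x‖ ≤ M) (hM : 1 ≤ M)
    {p : MvPolynomial σ ℝ} (hp : p.totalDegree ≤ N) : |eval x p| ≤ l1Norm p * M ^ N := by
  conv_lhs => rw [p.as_sum, map_sum]
  rw [l1Norm, sum_mul]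
  refine (abs_sum_le_sum_abs _ _).trans
    (sum_le_sum fun γ hγ => (abs_eval_monomial_le x γ _).trans ?_)
  refine mul_le_mul_of_nonneg_left ?_ (abs_nonneg _)
  calc ‖x‖ ^ γ.degree ≤ M ^ γ.degree := pow_le_pow_left₀ (norm_nonneg _) hx _
    _ ≤ M ^ N := pow_le_pow_right₀ hM ((le_totalDegree hγ).trans hp)

theorem abs_eval_sub_eval_truncTotalDegree_le {w : σ → ℝ} {R : ℝ} {E : ℕ} (hw : ‖w‖ ≤ R)
    (hR : 1 ≤ R) {p : MvPolynomial σ ℝ} (hp : p.totalDegree ≤ E) (m : ℕ) :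
    |eval w p - eval w (truncTotalDegree m p)| ≤ l1Norm p * R ^ E * ‖w‖ ^ m := by
  have hRE : 0 ≤ R ^ E * ‖w‖ ^ m :=
    mul_nonneg (pow_nonneg (by linarith) _) (pow_nonneg (norm_nonneg _) _)
  rw [← map_sub, sub_truncTotalDegree, map_sum, mul_assoc, l1Norm, sum_mul]
  refine (abs_sum_le_sum_abs _ _).trans ((sum_le_sum fun γ hγ => ?_).trans
    (sum_le_sum_of_subset_of_nonneg (filter_subset _ _) fun _ _ _ =>
      mul_nonneg (abs_nonneg _) hRE))
  rw [mem_filter, not_lt] at hγ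
  refine (abs_eval_monomial_le w γ _).trans (mul_le_mul_of_nonneg_left ?_ (abs_nonneg _))
  calc ‖w‖ ^ γ.degree = ‖w‖ ^ (γ.degree - m) * ‖w‖ ^ m := by
        rw [← pow_add, Nat.sub_add_cancel hγ.2]
    _ ≤ R ^ (γ.degree - m) * ‖w‖ ^ m := by gcongr
    _ ≤ R ^ E * ‖w‖ ^ m := by
        gcongr
        exact (Nat.sub_le _ _).trans ((le_totalDegree hγ.1).trans hp)

theorem l1Norm_translate_le (c : σ → ℝ) {p : MvPolynomial σ ℝ} {E : ℕ}
    (hp : p.totalDegree ≤ E) : l1Norm (translate c p) ≤ l1Norm p * (1 + ‖c‖) ^ E :=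
  l1Norm_aeval_le (fun i => (l1Norm_add_le _ _).trans <| by
      rw [l1Norm_X, l1Norm_C, ← Real.norm_eq_abs]
      gcongr
      exact norm_le_pi_norm c i)
    (le_add_of_nonneg_right (norm_nonneg c)) hp

theorem l1Norm_taylorTrunc_le (m : ℕ) (a : σ → ℝ) {p : MvPolynomial σ ℝ} {E : ℕ}
    (hp : p.totalDegree ≤ E) : l1Norm (taylorTrunc m a p) ≤ l1Norm p * (1 + ‖a‖) ^ (2 * E) := by
  have hdeg : (truncTotalDegree m (translate a p)).totalDegree ≤ E :=
    (totalDegree_truncTotalDegree_le m _).trans ((totalDegree_translate_le a p).trans hp)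
  calc l1Norm (taylorTrunc m a p)
      ≤ l1Norm (truncTotalDegree m (translate a p)) * (1 + ‖a‖) ^ E := by
        simpa only [taylorTrunc, norm_neg] using l1Norm_translate_le (-a) hdeg
    _ ≤ l1Norm p * (1 + ‖a‖) ^ E * (1 + ‖a‖) ^ E := by
        gcongr
        exact (l1Norm_truncTotalDegree_le m _).trans (l1Norm_translate_le a hp)
    _ = l1Norm p * (1 + ‖a‖) ^ (2 * E) := by rw [two_mul, pow_add, mul_assoc]

theorem abs_eval_sub_eval_taylorTrunc_le {x a : σ → ℝ} {R : ℝ} {E : ℕ} (hxa : ‖x - a‖ ≤ R)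
    (hR : 1 ≤ R) {p : MvPolynomial σ ℝ} (hp : p.totalDegree ≤ E) (m : ℕ) :
    |eval x p - eval x (taylorTrunc m a p)| ≤ l1Norm p * (1 + ‖a‖) ^ E * R ^ E * ‖x - a‖ ^ m := by
  have h := abs_eval_sub_eval_truncTotalDegree_le hxa hR
    ((totalDegree_translate_le a p).trans hp) m
  rw [eval_translate, sub_add_cancel, ← eval_taylorTrunc] at h
  refine h.trans (mul_le_mul_of_nonneg_right (mul_le_mul_of_nonneg_right
    (l1Norm_translate_le a hp) (pow_nonneg (by linarith) _)) (pow_nonneg (norm_nonneg _) _))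

theorem eval_taylorTrunc_one (x a : σ → ℝ) (p : MvPolynomial σ ℝ) :
    eval x (taylorTrunc 1 a p) = eval a p := by
  have hconst := totalDegree_eq_zero_iff_eq_C.1
    (Nat.lt_one_iff.1 (totalDegree_taylorTrunc_lt one_pos a p))
  -- the remainder estimate at `x = a` pins the constant down
  have hat := abs_eval_sub_eval_taylorTrunc_le (x := a) (a := a) (R := 1) (p := p)
    (by simp) le_rfl le_rfl 1
  rw [sub_self, norm_zero, zero_pow one_ne_zero, mul_zero, abs_nonpos_iff, sub_eq_zero] at hat
  rw [hat, hconst]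
  simp only [eval_C]

theorem abs_eval_sub_eval_le_mul {x a : σ → ℝ} {R : ℝ} {E : ℕ} (hxa : ‖x - a‖ ≤ R) (hR : 1 ≤ R)
    {p : MvPolynomial σ ℝ} (hp : p.totalDegree ≤ E) :
    |eval x p - eval a p| ≤ l1Norm p * (1 + ‖a‖) ^ E * R ^ E * ‖x - a‖ := by
  simpa only [eval_taylorTrunc_one, pow_one] using abs_eval_sub_eval_taylorTrunc_le hxa hR hp 1

end Estimates

end MvPolynomial

open MvPolynomial

section HolderApprox

variable {σ τ : Type*} [Fintype σ] [Fintype τ] {β K C M B : ℝ} {D : Set (σ → ℝ)}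

/-- A variant of `CHolder` that is better suited to composition: the coefficients are bounded in
`ℓ¹` instead of with factorial weights, and "degree `< β`" is written `totalDegree < ⌈β⌉₊`. It
describes the same class `CHolderU`, only with different constants. -/
structure IsHolderApprox (β : ℝ) (D : Set (σ → ℝ)) (f : (σ → ℝ) → ℝ)
    (P : (σ → ℝ) → MvPolynomial σ ℝ) (K C : ℝ) : Prop where
  totalDegree_lt : ∀ a ∈ D, (P a).totalDegree < ⌈β⌉₊
  abs_sub_eval_le : ∀ a ∈ D, ∀ x ∈ D, |f x - eval x (P a)| ≤ K * ‖x - a‖ ^ β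
  l1Norm_le : ∀ a ∈ D, l1Norm (P a) ≤ C

namespace IsHolderApprox

variable {f : (σ → ℝ) → ℝ} {P : (σ → ℝ) → MvPolynomial σ ℝ}

theorem apply_eq_eval (h : IsHolderApprox β D f P K C) (hβ : 0 < β) {a : σ → ℝ} (ha : a ∈ D) :
    f a = eval a (P a) := by
  have := h.abs_sub_eval_le a ha a ha
  rwa [sub_self, norm_zero, Real.zero_rpow hβ.ne', mul_zero, abs_nonpos_iff, sub_eq_zero] at this

theorem abs_eval_le (h : IsHolderApprox β D f P K C) (hM1 : 1 ≤ M) (hM : ∀ x ∈ D, ‖x‖ ≤ M)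
    {a x : σ → ℝ} (ha : a ∈ D) (hx : x ∈ D) : |eval x (P a)| ≤ C * M ^ ⌈β⌉₊ :=
  (MvPolynomial.abs_eval_le (hM x hx) hM1 (h.totalDegree_lt a ha).le).trans
    (mul_le_mul_of_nonneg_right (h.l1Norm_le a ha) (pow_nonneg (by linarith) _))

theorem abs_eval_sub_eval_le_mul (h : IsHolderApprox β D f P K C) (hB : 1 ≤ B)
    {a y z : σ → ℝ} (ha : a ∈ D) (hy : ‖y‖ ≤ B) (hz : ‖z‖ ≤ B) :
    |eval y (P a) - eval z (P a)| ≤ C * (1 + B) ^ ⌈β⌉₊ * (2 * B) ^ ⌈β⌉₊ * ‖y - z‖ := by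
  have hC : 0 ≤ C := (l1Norm_nonneg _).trans (h.l1Norm_le a ha)
  have hyz : ‖y - z‖ ≤ 2 * B := by simpa [two_mul] using norm_sub_le_of_le hy hz
  refine (MvPolynomial.abs_eval_sub_eval_le_mul hyz (by linarith)
    (h.totalDegree_lt a ha).le).trans ?_
  gcongr
  exact h.l1Norm_le a ha

theorem abs_sub_le_mul (h : IsHolderApprox β D f P K C) (hβ : 1 ≤ β) (hK : 0 ≤ K) (hM1 : 1 ≤ M)
    (hM : ∀ x ∈ D, ‖x‖ ≤ M) {a x : σ → ℝ} (ha : a ∈ D) (hx : x ∈ D) :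
    |f x - f a| ≤ (K * (2 * M) ^ (β - 1) + C * (1 + M) ^ ⌈β⌉₊ * (2 * M) ^ ⌈β⌉₊) * ‖x - a‖ := by
  have hxa : ‖x - a‖ ≤ 2 * M := by simpa [two_mul] using norm_sub_le_of_le (hM x hx) (hM a ha)
  have hrpow : ‖x - a‖ ^ β ≤ (2 * M) ^ (β - 1) * ‖x - a‖ := by
    simpa using rpow_le_rpow_sub_mul_rpow (norm_nonneg _) hxa zero_le_one hβ
  have hpoly := h.abs_eval_sub_eval_le_mul hM1 ha (hM x hx) (hM a ha)
  rw [← h.apply_eq_eval (by linarith) ha] at hpoly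
  calc |f x - f a| ≤ |f x - eval x (P a)| + |eval x (P a) - f a| := abs_sub_le _ _ _
    _ ≤ K * ((2 * M) ^ (β - 1) * ‖x - a‖)
        + C * (1 + M) ^ ⌈β⌉₊ * (2 * M) ^ ⌈β⌉₊ * ‖x - a‖ :=
      add_le_add ((h.abs_sub_eval_le a ha x hx).trans (mul_le_mul_of_nonneg_left hrpow hK)) hpoly
    _ = _ := by ring

end IsHolderApprox

theorem isHolderApprox_taylorTrunc {f : (σ → ℝ) → ℝ} {R : (σ → ℝ) → MvPolynomial σ ℝ} {E : ℕ}
    (hβ : 0 < β) (hM1 : 1 ≤ M) (hM : ∀ x ∈ D, ‖x‖ ≤ M)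
    (hdeg : ∀ a ∈ D, (R a).totalDegree ≤ E)
    (herr : ∀ a ∈ D, ∀ x ∈ D, |f x - eval x (R a)| ≤ K * ‖x - a‖ ^ β)
    (hl1 : ∀ a ∈ D, l1Norm (R a) ≤ C) :
    IsHolderApprox β D f (fun a => taylorTrunc ⌈β⌉₊ a (R a))
      (K + C * (1 + M) ^ E * (2 * M) ^ E * (2 * M) ^ (⌈β⌉₊ - β)) (C * (1 + M) ^ (2 * E)) where
  totalDegree_lt a _ := totalDegree_taylorTrunc_lt (Nat.ceil_pos.2 hβ) a (R a)
  abs_sub_eval_le a ha x hx := by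
    have hC : 0 ≤ C := (l1Norm_nonneg _).trans (hl1 a ha)
    have hxa : ‖x - a‖ ≤ 2 * M := by simpa [two_mul] using norm_sub_le_of_le (hM x hx) (hM a ha)
    have hrpow : ‖x - a‖ ^ ⌈β⌉₊ ≤ (2 * M) ^ (⌈β⌉₊ - β) * ‖x - a‖ ^ β := by
      rw [← Real.rpow_natCast]
      exact rpow_le_rpow_sub_mul_rpow (norm_nonneg _) hxa hβ.le (Nat.le_ceil β)
    have htrunc := abs_eval_sub_eval_taylorTrunc_le hxa (by linarith) (hdeg a ha) ⌈β⌉₊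
    calc |f x - eval x (taylorTrunc ⌈β⌉₊ a (R a))|
        ≤ |f x - eval x (R a)| + |eval x (R a) - eval x (taylorTrunc ⌈β⌉₊ a (R a))| :=
          abs_sub_le _ _ _
      _ ≤ K * ‖x - a‖ ^ β
          + C * (1 + M) ^ E * (2 * M) ^ E * ((2 * M) ^ (⌈β⌉₊ - β) * ‖x - a‖ ^ β) := by
        refine add_le_add (herr a ha x hx) (htrunc.trans ?_)
        gcongr
        exacts [hl1 a ha, hM a ha]
      _ = _ := by ring
  l1Norm_le a ha := (l1Norm_taylorTrunc_le _ a (hdeg a ha)).trans (by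
    have hC : 0 ≤ C := (l1Norm_nonneg _).trans (hl1 a ha)
    gcongr
    exacts [hl1 a ha, hM a ha])

variable {f : (σ → ℝ) → τ → ℝ} {P : τ → (σ → ℝ) → MvPolynomial σ ℝ} {g : (τ → ℝ) → ℝ}
  {Q : (τ → ℝ) → MvPolynomial τ ℝ} {Kg Cg : ℝ}

theorem exists_abs_comp_sub_eval_aeval_le (hβ : 1 ≤ β) (hM1 : 1 ≤ M) (hM : ∀ x ∈ D, ‖x‖ ≤ M)
    (hK : 0 ≤ K) (hC : 0 ≤ C) (hKg : 0 ≤ Kg)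
    (hf : ∀ i, IsHolderApprox β D (fun x => f x i) (P i) K C)
    (hg : IsHolderApprox β Set.univ g Q Kg Cg) :
    ∃ K', ∀ a ∈ D, ∀ x ∈ D,
      |g (f x) - eval x (aeval (fun i => P i a) (Q (f a)))| ≤ K' * ‖x - a‖ ^ β := by
  set N := ⌈β⌉₊
  set L := K * (2 * M) ^ (β - 1) + C * (1 + M) ^ N * (2 * M) ^ N
  set B := max (C * M ^ N) 1
  have hL : 0 ≤ L := by positivity
  have hB : 1 ≤ B := le_max_right _ _
  have hCg : 0 ≤ Cg := (l1Norm_nonneg _).trans (hg.l1Norm_le 0 trivial)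
  have hfL : ∀ a ∈ D, ∀ x ∈ D, ‖f x - f a‖ ≤ L * ‖x - a‖ := fun a ha x hx =>
    (pi_norm_le_iff_of_nonneg (by positivity)).2 fun i =>
      (hf i).abs_sub_le_mul hβ hK hM1 hM ha hx
  have hPB : ∀ a ∈ D, ∀ x ∈ D, ‖fun i => eval x (P i a)‖ ≤ B := fun a ha x hx =>
    (pi_norm_le_iff_of_nonneg (by linarith)).2 fun i =>
      ((hf i).abs_eval_le hM1 hM ha hx).trans (le_max_left _ _)
  have hfP : ∀ a ∈ D, ∀ x ∈ D, ‖f x - fun i => eval x (P i a)‖ ≤ K * ‖x - a‖ ^ β :=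
    fun a ha x hx => (pi_norm_le_iff_of_nonneg (by positivity)).2 fun i =>
      (hf i).abs_sub_eval_le a ha x hx
  have hfB : ∀ x ∈ D, ‖f x‖ ≤ B := fun x hx => by
    convert hPB x hx x hx using 2
    exact funext fun i => (hf i).apply_eq_eval (by linarith) hx
  refine ⟨Kg * L ^ β + Cg * (1 + B) ^ N * (2 * B) ^ N * K, fun a ha x hx => ?_⟩
  set y := fun i => eval x (P i a)
  have hQ := hg.abs_eval_sub_eval_le_mul hB (Set.mem_univ (f a)) (hfB x hx) (hPB a ha x hx)
  rw [eval_aeval]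
  calc |g (f x) - eval y (Q (f a))|
      ≤ |g (f x) - eval (f x) (Q (f a))| + |eval (f x) (Q (f a)) - eval y (Q (f a))| :=
        abs_sub_le _ _ _
    _ ≤ Kg * (L * ‖x - a‖) ^ β + Cg * (1 + B) ^ N * (2 * B) ^ N * (K * ‖x - a‖ ^ β) := by
      refine add_le_add ((hg.abs_sub_eval_le _ trivial _ trivial).trans ?_) (hQ.trans ?_)
      · gcongr
        exact hfL a ha x hx
      · gcongr
        exact hfP a ha x hx
    _ = _ := by rw [Real.mul_rpow hL (norm_nonneg _)]; ring

theorem IsHolderApprox.comp (hβ : 1 ≤ β) (hD : Bornology.IsBounded D) (hK : 0 ≤ K) (hC : 0 ≤ C)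
    (hKg : 0 ≤ Kg) (hf : ∀ i, IsHolderApprox β D (fun x => f x i) (P i) K C)
    (hg : IsHolderApprox β Set.univ g Q Kg Cg) :
    ∃ K' C', IsHolderApprox β D (fun x => g (f x))
      (fun a => taylorTrunc ⌈β⌉₊ a (aeval (fun i => P i a) (Q (f a)))) K' C' := by
  obtain ⟨M, hM⟩ := hD.exists_norm_le
  have hM' : ∀ x ∈ D, ‖x‖ ≤ max M 1 := fun x hx => (hM x hx).trans (le_max_left _ _)
  obtain ⟨K', hK'⟩ := exists_abs_comp_sub_eval_aeval_le hβ (le_max_right _ _) hM' hK hC hKg hf hg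
  have hdeg : ∀ a ∈ D, (aeval (fun i => P i a) (Q (f a))).totalDegree ≤ ⌈β⌉₊ * ⌈β⌉₊ :=
    fun a ha => totalDegree_aeval_le (fun i => ((hf i).totalDegree_lt a ha).le)
      (hg.totalDegree_lt _ trivial).le
  have hl1 : ∀ a ∈ D, l1Norm (aeval (fun i => P i a) (Q (f a))) ≤ Cg * (C + 1) ^ ⌈β⌉₊ :=
    fun a ha => (l1Norm_aeval_le (fun i => ((hf i).l1Norm_le a ha).trans (by linarith))
      (by linarith) (hg.totalDegree_lt _ trivial).le).trans
        (mul_le_mul_of_nonneg_right (hg.l1Norm_le _ trivial) (by positivity))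
  exact ⟨_, _, isHolderApprox_taylorTrunc (by linarith) (le_max_right _ _) hM' hdeg hK' hl1⟩

end HolderApprox

section CHolder

open scoped Nat

variable {r : ℕ} {β K : ℝ} {D : Set (Fin r → ℝ)} {f : (Fin r → ℝ) → ℝ}

theorem mem_CHolderU_iff : f ∈ CHolderU r β D ↔ ∃ K, 0 < K ∧ f ∈ CHolder r β D K := by
  simp only [CHolderU, Set.mem_iUnion, Set.mem_Ioi, exists_prop]

theorem CHolder_mono {K K' : ℝ} (h : K ≤ K') : CHolder r β D K ⊆ CHolder r β D K' := by
  rintro f ⟨P, hdeg, herr, hcoef⟩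
  exact ⟨P, hdeg, fun a ha x hx => (herr a ha x hx).trans (by gcongr),
    fun a ha γ => (hcoef a ha γ).trans h⟩

theorem exists_forall_mem_CHolder {ι : Type*} [Fintype ι] {f : ι → (Fin r → ℝ) → ℝ}
    (hf : ∀ i, f i ∈ CHolderU r β D) : ∃ K, 0 < K ∧ ∀ i, f i ∈ CHolder r β D K := by
  choose K hK hfK using fun i => mem_CHolderU_iff.1 (hf i)
  have hsum : 0 ≤ ∑ i, K i := sum_nonneg fun i _ => (hK i).le
  refine ⟨1 + ∑ i, K i, by linarith, fun i => CHolder_mono ?_ (hfK i)⟩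
  linarith [single_le_sum (fun j _ => (hK j).le) (mem_univ i)]

theorem totalDegree_lt_ceil_iff {σ : Type*} [Fintype σ] (hβ : 0 < β) {p : MvPolynomial σ ℝ} :
    p.totalDegree < ⌈β⌉₊ ↔ ∀ γ ∈ p.support, ((∑ i, γ i : ℕ) : ℝ) < β := by
  rw [totalDegree, Finset.sup_lt_iff (Nat.ceil_pos.2 hβ)]
  refine forall₂_congr fun γ _ => ?_
  rw [Nat.lt_ceil, ← Finsupp.degree_eq_sum]
  rfl

theorem isHolderApprox_of_mem_CHolder (hβ : 0 < β) (hf : f ∈ CHolder r β D K) :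
    ∃ P, IsHolderApprox β D f P K
      (#(Iic (Finsupp.equivFunOnFinite.symm fun _ : Fin r => ⌈β⌉₊)) * K) := by
  obtain ⟨P, hdeg, herr, hcoef⟩ := hf
  have hdeg' a (ha : a ∈ D) := (totalDegree_lt_ceil_iff hβ).2 (hdeg a ha)
  refine ⟨P, hdeg', herr, fun a ha =>
    l1Norm_le_card_mul (support_subset_Iic_of_totalDegree_le (hdeg' a ha).le) fun γ => ?_⟩
  refine le_trans ?_ (hcoef a ha γ)
  exact le_mul_of_one_le_left (abs_nonneg _)
    (Nat.one_le_cast.2 (prod_pos fun i _ => Nat.factorial_pos _))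

theorem mem_CHolderU_of_isHolderApprox {P : (Fin r → ℝ) → MvPolynomial (Fin r) ℝ} {C : ℝ}
    (hβ : 0 < β) (h : IsHolderApprox β D f P K C) : f ∈ CHolderU r β D := by
  set N := ⌈β⌉₊
  have hK' : 0 < |K| + N ! * |C| + 1 := by positivity
  refine mem_CHolderU_iff.2 ⟨_, hK', P, fun a ha => (totalDegree_lt_ceil_iff hβ).1
    (h.totalDegree_lt a ha), fun a ha x hx => (h.abs_sub_eval_le a ha x hx).trans ?_,
    fun a ha γ => ?_⟩
  · have hNC : 0 ≤ (N ! : ℝ) * |C| := by positivity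
    gcongr
    linarith [le_abs_self K]
  by_cases hγ : γ ∈ (P a).support
  · have hfact : ∏ i, (γ i)! ≤ N ! :=
      (Nat.le_of_dvd (Nat.factorial_pos _) (Nat.prod_factorial_dvd_factorial_sum _ _)).trans
        (Nat.factorial_le (γ.degree_eq_sum ▸ (le_totalDegree hγ).trans (h.totalDegree_lt a ha).le))
    calc ((∏ i, (γ i)! : ℕ) : ℝ) * |coeff γ (P a)| ≤ N ! * |C| :=
          mul_le_mul (by exact_mod_cast hfact)
            ((abs_coeff_le_l1Norm _ _).trans ((h.l1Norm_le a ha).trans (le_abs_self C)))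
            (abs_nonneg _) (by positivity)
      _ ≤ |K| + N ! * |C| + 1 := by linarith [abs_nonneg K]
  · rw [notMem_support_iff.1 hγ, abs_zero, mul_zero]
    exact hK'.le

end CHolder

/-- Composition of generalized Hölder functions: if `D ⊂ ℝ^r` is bounded, `β ≥ 1`,
`f : D → ℝ^q` has all components in `C_r^β(D)` and `g ∈ C_q^β(ℝ^q)`, then
`g ∘ f ∈ C_r^β(D)`. -/
theorem holder_composition (r q : ℕ) (β : ℝ) (hβ : 1 ≤ β)
    (D : Set (Fin r → ℝ)) (hD : Bornology.IsBounded D)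
    (f : (Fin r → ℝ) → Fin q → ℝ) (hf : ∀ i, (fun x => f x i) ∈ CHolderU r β D)
    (g : (Fin q → ℝ) → ℝ) (hg : g ∈ CHolderU q β Set.univ) :
    (fun x => g (f x)) ∈ CHolderU r β D := by
  have hβ0 : 0 < β := by linarith
  obtain ⟨K, hK, hfK⟩ := exists_forall_mem_CHolder hf
  choose P hP using fun i => isHolderApprox_of_mem_CHolder hβ0 (hfK i)
  obtain ⟨Kg, hKg, hgK⟩ := mem_CHolderU_iff.1 hg
  obtain ⟨Q, hQ⟩ := isHolderApprox_of_mem_CHolder hβ0 hgK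
  obtain ⟨K', C', hgf⟩ := IsHolderApprox.comp hβ hD hK.le (by positivity) hKg.le hP hQ
  exact mem_CHolderU_of_isHolderApprox hβ0 hgf
end

section
/- Composition of ReLU networks: if f ∈ ℱ(L, p) with p = (p_0,…,p_{L+1}), g ∈ ℱ(L', p') with p' = (p'_0,…,p'_{L'+1}), p_{L+1} = p'_0, and v ∈ [−1,1]^{p_{L+1}}, then g ∘ σ_v(f) ∈ ℱ(L + L' + 1, (p_0, …, p_{L+1}, p'_1, …, p'_{L'+1})). -/
open Finset

/-- Evaluation of a ReLU feedforward network with `L` hidden layers, width function `p`,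
weight matrices `W` and shift vectors `v`:
`x ↦ W_L σ_{v_L} W_{L-1} ⋯ W_1 σ_{v_1} W_0 x`. -/
noncomputable def netEval (p : ℕ → ℕ)
    (W : ∀ l : ℕ, Matrix (Fin (p (l + 1))) (Fin (p l)) ℝ)
    (v : ∀ l : ℕ, Fin (p l) → ℝ) : (L : ℕ) → (Fin (p 0) → ℝ) → Fin (p (L + 1)) → ℝ
  | 0, x => (W 0).mulVec x
  | (L + 1), x => (W (L + 1)).mulVec fun i => max (netEval p W v L x i - v (L + 1) i) 0

open Classical in
/-- Number of non-zero entries of a matrix. -/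
noncomputable def matSupp {m n : ℕ} (A : Matrix (Fin m) (Fin n) ℝ) : ℕ :=
  (Finset.univ.filter fun ij : Fin m × Fin n => A ij.1 ij.2 ≠ 0).card

open Classical in
/-- Number of non-zero entries of a vector. -/
noncomputable def vecSupp {n : ℕ} (u : Fin n → ℝ) : ℕ :=
  (Finset.univ.filter fun i : Fin n => u i ≠ 0).card

/-- All weight-matrix and shift-vector entries bounded in absolute value by one. -/
def NetParamsOK (L : ℕ) (p : ℕ → ℕ)
    (W : ∀ l : ℕ, Matrix (Fin (p (l + 1))) (Fin (p l)) ℝ)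
    (v : ∀ l : ℕ, Fin (p l) → ℝ) : Prop :=
  (∀ l ≤ L, ∀ i j, |W l i j| ≤ 1) ∧ (∀ l, 1 ≤ l → l ≤ L → ∀ i, |v l i| ≤ 1)

/-- Total number of non-zero network parameters `∑_j ‖W_j‖_0 + |v_j|_0`. -/
noncomputable def netSparsity (L : ℕ) (p : ℕ → ℕ)
    (W : ∀ l : ℕ, Matrix (Fin (p (l + 1))) (Fin (p l)) ℝ)
    (v : ∀ l : ℕ, Fin (p l) → ℝ) : ℕ :=
  (∑ l ∈ Finset.range (L + 1), matSupp (W l)) + ∑ l ∈ Finset.Icc 1 L, vecSupp (v l)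

/-- The class `ℱ(L, p)` of fully connected ReLU networks with `L` hidden layers, width
function `p` (with `p 0 = d` inputs and `p (L+1) = k` outputs) and all parameters bounded
in absolute value by one, viewed as functions `ℝ^d → ℝ^k`. -/
noncomputable def NetClassF (L d k : ℕ) (p : ℕ → ℕ) : Set ((Fin d → ℝ) → Fin k → ℝ) :=
  {f | ∃ (h0 : p 0 = d) (h1 : p (L + 1) = k)
      (W : ∀ l : ℕ, Matrix (Fin (p (l + 1))) (Fin (p l)) ℝ)
      (v : ∀ l : ℕ, Fin (p l) → ℝ),
    NetParamsOK L p W v ∧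
    ∀ x : Fin d → ℝ,
      f x = fun j => netEval p W v L (fun i => x (Fin.cast h0 i)) (Fin.cast h1.symm j)}

/-- The class `ℱ(L, p, s)` of `s`-sparse ReLU networks with parameters bounded by one. -/
noncomputable def NetClass (L d k : ℕ) (p : ℕ → ℕ) (s : ℕ) : Set ((Fin d → ℝ) → Fin k → ℝ) :=
  {f | ∃ (h0 : p 0 = d) (h1 : p (L + 1) = k)
      (W : ∀ l : ℕ, Matrix (Fin (p (l + 1))) (Fin (p l)) ℝ)
      (v : ∀ l : ℕ, Fin (p l) → ℝ),
    NetParamsOK L p W v ∧ netSparsity L p W v ≤ s ∧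
    ∀ x : Fin d → ℝ,
      f x = fun j => netEval p W v L (fun i => x (Fin.cast h0 i)) (Fin.cast h1.symm j)}

/-!
Stacking the weight matrices `W_0, …, W_L, W'_0, …, W'_{L'}` and the shifts
`v_1, …, v_L, v, v'_1, …, v'_{L'}` gives a network of depth `L + 1 + L'` with widths
`(p_0, …, p_{L+1}, p'_1, …, p'_{L'+1})`. Its evaluation splits after hidden layer `L`
into `σ_v` of the first network followed by the second one, and on either side of the split
it agrees with the original networks once the widths are identified.
-/

open Function

lemma extend_induction {α β γ : Type*} {P : γ → Prop} (f : α → β) {g : α → γ} {e' : β → γ}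
    (hg : ∀ a, P (g a)) (he : ∀ b, P (e' b)) (b : β) : P (extend f g e' b) := by
  classical
  rw [extend_def]
  split_ifs
  exacts [hg _, he b]

lemma Matrix.mulVec_cast_congr {R : Type*} [NonUnitalNonAssocSemiring R] {m n m' n' : ℕ}
    (hm : m = m') (hn : n = n') {A : Matrix (Fin m) (Fin n) R} {B : Matrix (Fin m') (Fin n') R}
    (hAB : ∀ i j, A i j = B (Fin.cast hm i) (Fin.cast hn j)) {x : Fin n → R} {y : Fin n' → R}
    (hxy : ∀ j, x j = y (Fin.cast hn j)) (i : Fin m) :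
    A.mulVec x i = B.mulVec y (Fin.cast hm i) := by
  subst hm hn
  simp only [Fin.cast_eq_self] at hAB hxy ⊢
  rw [Matrix.ext hAB, funext hxy]

section
variable {p q : ℕ → ℕ} {W : ∀ l, Matrix (Fin (p (l + 1))) (Fin (p l)) ℝ} {v : ∀ l, Fin (p l) → ℝ}

theorem netEval_add (n m : ℕ) (x : Fin (p 0) → ℝ) :
    netEval p W v (n + 1 + m) x
      = netEval (fun l => p (n + 1 + l)) (fun l => W (n + 1 + l)) (fun l => v (n + 1 + l)) m
          fun i => max (netEval p W v n x i - v (n + 1) i) 0 := by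
  induction m with
  | zero => rfl
  | succ m ih =>
    show (W (n + 1 + m + 1)).mulVec (fun i => max (netEval p W v (n + 1 + m) x i - _) 0) = _
    rw [ih]
    rfl

theorem netEval_congr {W₂ : ∀ l, Matrix (Fin (q (l + 1))) (Fin (q l)) ℝ} {v₂ : ∀ l, Fin (q l) → ℝ}
    {n : ℕ} (hpq : ∀ l ≤ n + 1, p l = q l)
    (hW : ∀ l (hl : l ≤ n) i j,
      W l i j = W₂ l (Fin.cast (hpq (l + 1) (by omega)) i) (Fin.cast (hpq l (by omega)) j))
    (hv : ∀ l, 1 ≤ l → ∀ (hl : l ≤ n) i, v l i = v₂ l (Fin.cast (hpq l (by omega)) i))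
    {x : Fin (p 0) → ℝ} {y : Fin (q 0) → ℝ} (hxy : ∀ i, x i = y (Fin.cast (hpq 0 (by omega)) i))
    (j : Fin (p (n + 1))) :
    netEval p W v n x j = netEval q W₂ v₂ n y (Fin.cast (hpq (n + 1) le_rfl) j) := by
  induction n with
  | zero => exact Matrix.mulVec_cast_congr _ _ (hW 0 le_rfl) hxy j
  | succ n ih =>
    refine Matrix.mulVec_cast_congr _ _ (hW (n + 1) le_rfl) (fun i => ?_) j
    rw [ih (fun l hl => hpq l (by omega)) (fun l hl => hW l (by omega))
      (fun l h1 hl => hv l h1 (by omega)) hxy, hv (n + 1) (by omega) le_rfl]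
end

lemma abs_extend_val_le {n : ℕ} {u : Fin n → ℝ} {c : ℝ} (hc : 0 ≤ c) (hu : ∀ i, |u i| ≤ c)
    (i : ℕ) : |extend Fin.val u 0 i| ≤ c :=
  extend_induction (P := fun r => |r| ≤ c) _ hu (fun _ => by simpa using hc) i

lemma abs_extend_val_matrix_le {m n : ℕ} {A : Matrix (Fin m) (Fin n) ℝ} {c : ℝ} (hc : 0 ≤ c)
    (hA : ∀ i j, |A i j| ≤ c) (i j : ℕ) :
    |extend Fin.val (fun a => extend Fin.val (A a) 0) 0 i j| ≤ c :=
  extend_induction (P := fun r : ℕ → ℝ => |r j| ≤ c) _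
    (fun a => abs_extend_val_le hc (hA a) j) (fun _ => by simpa using hc) i

section
variable {k L' : ℕ} {p p' : ℕ → ℕ}

def concatWidth (L : ℕ) (p p' : ℕ → ℕ) : ℕ → ℕ :=
  fun l => if l ≤ L + 1 then p l else p' (l - (L + 1))

/- The stacked parameters are read off at natural-number indices, extended by zero, so that no
cast between the propositionally equal widths `p l` and `concatWidth L p p' l` enters the
definitions. -/
noncomputable def concatWeights (L : ℕ) (W : ∀ l, Matrix (Fin (p (l + 1))) (Fin (p l)) ℝ)
    (W' : ∀ l, Matrix (Fin (p' (l + 1))) (Fin (p' l)) ℝ) (l : ℕ) :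
    Matrix (Fin (concatWidth L p p' (l + 1))) (Fin (concatWidth L p p' l)) ℝ :=
  Matrix.of fun i j =>
    if l ≤ L then extend Fin.val (fun a => extend Fin.val (W l a) 0) 0 i j
    else extend Fin.val (fun a => extend Fin.val (W' (l - (L + 1)) a) 0) 0 i j

noncomputable def concatShifts (L : ℕ) (u : ∀ l, Fin (p l) → ℝ) (w : Fin k → ℝ)
    (u' : ∀ l, Fin (p' l) → ℝ) (l : ℕ) (i : Fin (concatWidth L p p' l)) : ℝ :=
  if l ≤ L then extend Fin.val (u l) 0 i
  else if l = L + 1 then extend Fin.val w 0 i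
  else extend Fin.val (u' (l - (L + 1))) 0 i

variable {L : ℕ} {W : ∀ l, Matrix (Fin (p (l + 1))) (Fin (p l)) ℝ}
  {W' : ∀ l, Matrix (Fin (p' (l + 1))) (Fin (p' l)) ℝ} {u : ∀ l, Fin (p l) → ℝ}
  {u' : ∀ l, Fin (p' l) → ℝ} {w : Fin k → ℝ}

lemma concatWidth_of_le {l : ℕ} (hl : l ≤ L + 1) : p l = concatWidth L p p' l :=
  (if_pos hl).symm

lemma concatWidth_add (hk : p (L + 1) = p' 0) (l : ℕ) : p' l = concatWidth L p p' (L + 1 + l) := by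
  rcases l with _ | l
  · exact hk.symm.trans (concatWidth_of_le le_rfl)
  · simp [concatWidth]

lemma concatWeights_of_le {l : ℕ} (hl : l ≤ L) (i : Fin (p (l + 1))) (j : Fin (p l)) :
    W l i j = concatWeights L W W' l (Fin.cast (concatWidth_of_le (by omega)) i)
      (Fin.cast (concatWidth_of_le (by omega)) j) := by
  simp [concatWeights, hl, Fin.val_injective.extend_apply]

lemma concatWeights_add (hk : p (L + 1) = p' 0) (l : ℕ) (i : Fin (p' (l + 1))) (j : Fin (p' l)) :
    W' l i j = concatWeights L W W' (L + 1 + l) (Fin.cast (concatWidth_add hk (l + 1)) i)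
      (Fin.cast (concatWidth_add hk l) j) := by
  simp only [concatWeights, Matrix.of_apply, if_neg (show ¬L + 1 + l ≤ L by omega), Fin.val_cast]
  rw [Nat.add_sub_cancel_left]
  simp only [Fin.val_injective.extend_apply]

lemma concatShifts_of_le {l : ℕ} (hl : l ≤ L) (i : Fin (p l)) :
    u l i = concatShifts L u w u' l (Fin.cast (concatWidth_of_le (by omega)) i) := by
  simp [concatShifts, hl, Fin.val_injective.extend_apply]

lemma concatShifts_succ (hk : p (L + 1) = k) (i : Fin (p (L + 1))) :
    w (Fin.cast hk i) = concatShifts L u w u' (L + 1) (Fin.cast (concatWidth_of_le le_rfl) i) := by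
  subst hk
  simp [concatShifts, Fin.val_injective.extend_apply]

lemma concatShifts_add (hk : p (L + 1) = p' 0) {l : ℕ} (hl : 1 ≤ l) (i : Fin (p' l)) :
    u' l i = concatShifts L u w u' (L + 1 + l) (Fin.cast (concatWidth_add hk l) i) := by
  simp only [concatShifts, if_neg (show ¬L + 1 + l ≤ L by omega),
    if_neg (show L + 1 + l ≠ L + 1 by omega), Fin.val_cast]
  rw [Nat.add_sub_cancel_left, Fin.val_injective.extend_apply]

theorem netParamsOK_concat (hN : NetParamsOK L p W u) (hN' : NetParamsOK L' p' W' u')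
    (hw : ∀ i, |w i| ≤ 1) :
    NetParamsOK (L + 1 + L') (concatWidth L p p') (concatWeights L W W')
      (concatShifts L u w u') := by
  obtain ⟨hW, hu⟩ := hN
  obtain ⟨hW', hu'⟩ := hN'
  refine ⟨fun l hl i j => ?_, fun l h1 hl i => ?_⟩
  · simp only [concatWeights, Matrix.of_apply]
    split_ifs with hlL
    · exact abs_extend_val_matrix_le zero_le_one (hW l hlL) i j
    · exact abs_extend_val_matrix_le zero_le_one (hW' _ (by omega)) i j
  · simp only [concatShifts]
    split_ifs with hlL hlL'
    · exact abs_extend_val_le zero_le_one (hu l h1 hlL) i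
    · exact abs_extend_val_le zero_le_one hw i
    · exact abs_extend_val_le zero_le_one (hu' _ (by omega) (by omega)) i

theorem netEval_concat (hk : p (L + 1) = k) (hk' : p' 0 = k) (x : Fin (concatWidth L p p' 0) → ℝ)
    (j : Fin (concatWidth L p p' (L + 1 + L' + 1))) :
    netEval (concatWidth L p p') (concatWeights L W W') (concatShifts L u w u') (L + 1 + L') x j
      = netEval p' W' u' L'
          (fun i => max (netEval p W u L (fun a => x (Fin.cast (concatWidth_of_le (by omega)) a))
            (Fin.cast hk.symm (Fin.cast hk' i)) - w (Fin.cast hk' i)) 0)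
          (Fin.cast (concatWidth_add (hk.trans hk'.symm) (L' + 1)).symm j) := by
  have hpp' : p (L + 1) = p' 0 := hk.trans hk'.symm
  have hprefix := netEval_congr (n := L) (W := W) (v := u) (W₂ := concatWeights L W W')
    (v₂ := concatShifts L u w u') (fun l hl => concatWidth_of_le hl)
    (fun l hl => concatWeights_of_le hl) (fun l _ hl => concatShifts_of_le hl)
    (x := fun a => x (Fin.cast _ a)) (fun _ => rfl)
  rw [netEval_add]
  refine (netEval_congr (n := L') (W := W') (v := u')
    (W₂ := fun l => concatWeights L W W' (L + 1 + l))
    (v₂ := fun l => concatShifts L u w u' (L + 1 + l))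
    (fun l _ => concatWidth_add hpp' l) (fun l _ => concatWeights_add hpp' l)
    (fun l h1 _ => concatShifts_add hpp' h1) (fun i => ?_)
    (Fin.cast (concatWidth_add hpp' (L' + 1)).symm j)).symm
  rw [hprefix]
  congr 2
  exact concatShifts_succ hk (Fin.cast hpp'.symm i)

end

/-- Composition of ReLU networks: if `f ∈ ℱ(L, p)`, `g ∈ ℱ(L', p')` with
`p_{L+1} = p'_0` and `v ∈ [−1,1]^{p_{L+1}}`, then
`g ∘ σ_v(f) ∈ ℱ(L + L' + 1, (p_0, …, p_{L+1}, p'_1, …, p'_{L'+1}))`. -/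
theorem netClass_comp (L L' d k e : ℕ) (p p' : ℕ → ℕ)
    (f : (Fin d → ℝ) → Fin k → ℝ) (g : (Fin k → ℝ) → Fin e → ℝ)
    (hf : f ∈ NetClassF L d k p) (hg : g ∈ NetClassF L' k e p')
    (v : Fin k → ℝ) (hv : ∀ i, |v i| ≤ 1) :
    (fun x => g fun i => max (f x i - v i) 0)
      ∈ NetClassF (L + L' + 1) d e
        (fun l => if l ≤ L + 1 then p l else p' (l - (L + 1))) := by
  obtain ⟨hd, hk, W, u, hN, hf⟩ := hf
  obtain ⟨hk', he, W', u', hN', hg⟩ := hg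
  rw [show L + L' + 1 = L + 1 + L' by omega]
  change _ ∈ NetClassF (L + 1 + L') d e (concatWidth L p p')
  refine ⟨(concatWidth_of_le (Nat.zero_le _)).symm.trans hd,
    (concatWidth_add (hk.trans hk'.symm) (L' + 1)).symm.trans he, concatWeights L W W',
    concatShifts L u v u', netParamsOK_concat hN hN' hv, fun x => funext fun j => ?_⟩
  change g _ j = _
  rw [hg, hf, netEval_concat hk hk']
  rfl
end

section
/- Parallelization: if f ∈ ℱ(L, p, s) and g ∈ ℱ(L, p', s') with p_0 = p'_0, then the function x ↦ (f(x), g(x)) belongs to ℱ(L, (p_0, p_1 + p'_1, …, p_{L+1} + p'_{L+1}), s + s'). -/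
open Finset

/-!
The parallel network shares the input layer: its first weight matrix stacks the first-layer
weights of both networks, and every later weight matrix is block diagonal, with the shift
vectors concatenated. Block-diagonal weights and coordinatewise ReLU keep the two halves of each
hidden layer independent, so by induction on depth the parallel network computes
`x ↦ (f(x), g(x))`. Its parameters are those of the two networks padded with zeros, so the bound
by one persists and the non-zero counts add up.
-/

open Matrix

section FinBlocks

variable {R : Type*} {a b c e : ℕ}

lemma vecSupp_append (u : Fin a → ℝ) (w : Fin c → ℝ) :
    vecSupp (Fin.append u w) = vecSupp u + vecSupp w := by
  classical
  simp [vecSupp, Finset.card_filter, Fin.sum_univ_add]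

@[simp]
lemma vecSupp_zero : vecSupp (0 : Fin a → ℝ) = 0 := by
  simp [vecSupp]

lemma matSupp_eq_sum_vecSupp (A : Matrix (Fin a) (Fin b) ℝ) : matSupp A = ∑ i, vecSupp (A i) := by
  classical
  simp [matSupp, vecSupp, Finset.card_filter, Fintype.sum_prod_type]

lemma abs_append_le {r : ℝ} {u : Fin a → ℝ} {w : Fin c → ℝ} (hu : ∀ i, |u i| ≤ r)
    (hw : ∀ i, |w i| ≤ r) (i : Fin (a + c)) : |Fin.append u w i| ≤ r := by
  induction i using Fin.addCases <;> simp [hu, hw]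

def finStack {n : Type*} (A : Matrix (Fin a) n R) (B : Matrix (Fin c) n R) :
    Matrix (Fin (a + c)) n R :=
  of fun i j => Fin.append (A · j) (B · j) i

@[simp]
lemma finStack_castAdd {n : Type*} (A : Matrix (Fin a) n R) (B : Matrix (Fin c) n R) (i : Fin a) :
    finStack A B (Fin.castAdd c i) = A i := by
  ext j
  simp [finStack]

@[simp]
lemma finStack_natAdd {n : Type*} (A : Matrix (Fin a) n R) (B : Matrix (Fin c) n R) (i : Fin c) :
    finStack A B (Fin.natAdd a i) = B i := by
  ext j
  simp [finStack]

lemma finStack_mulVec {n : Type*} [Fintype n] [NonUnitalNonAssocSemiring R]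
    (A : Matrix (Fin a) n R) (B : Matrix (Fin c) n R) (x : n → R) :
    finStack A B *ᵥ x = Fin.append (A *ᵥ x) (B *ᵥ x) := by
  funext i
  induction i using Fin.addCases <;> simp [mulVec]

lemma abs_finStack_le {n : Type*} {r : ℝ} {A : Matrix (Fin a) n ℝ} {B : Matrix (Fin c) n ℝ}
    (hA : ∀ i j, |A i j| ≤ r) (hB : ∀ i j, |B i j| ≤ r) (i : Fin (a + c)) (j : n) :
    |finStack A B i j| ≤ r :=
  abs_append_le (hA · j) (hB · j) i

lemma matSupp_finStack (A : Matrix (Fin a) (Fin b) ℝ) (B : Matrix (Fin c) (Fin b) ℝ) :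
    matSupp (finStack A B) = matSupp A + matSupp B := by
  simp [matSupp_eq_sum_vecSupp, Fin.sum_univ_add]

lemma submatrix_cast_mulVec {m : Type*} [NonUnitalNonAssocSemiring R] (h : a = b)
    (A : Matrix m (Fin a) R) (x : Fin b → R) :
    A.submatrix id (Fin.cast h.symm) *ᵥ x = A *ᵥ (x ∘ Fin.cast h) := by
  subst h
  rfl

lemma matSupp_submatrix_cast (h : a = b) (A : Matrix (Fin c) (Fin a) ℝ) :
    matSupp (A.submatrix id (Fin.cast h.symm)) = matSupp A := by
  subst h
  rfl

def finBlockDiag [Zero R] (A : Matrix (Fin a) (Fin b) R) (B : Matrix (Fin c) (Fin e) R) :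
    Matrix (Fin (a + c)) (Fin (b + e)) R :=
  of fun i j => Fin.append (fun k => Fin.append (A k) 0 j) (fun k => Fin.append 0 (B k) j) i

@[simp]
lemma finBlockDiag_castAdd [Zero R] (A : Matrix (Fin a) (Fin b) R) (B : Matrix (Fin c) (Fin e) R)
    (i : Fin a) : finBlockDiag A B (Fin.castAdd c i) = Fin.append (A i) 0 := by
  ext j
  simp [finBlockDiag]

@[simp]
lemma finBlockDiag_natAdd [Zero R] (A : Matrix (Fin a) (Fin b) R) (B : Matrix (Fin c) (Fin e) R)
    (i : Fin c) : finBlockDiag A B (Fin.natAdd a i) = Fin.append 0 (B i) := by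
  ext j
  simp [finBlockDiag]

lemma finBlockDiag_mulVec_append [NonUnitalNonAssocSemiring R] (A : Matrix (Fin a) (Fin b) R)
    (B : Matrix (Fin c) (Fin e) R) (u : Fin b → R) (w : Fin e → R) :
    finBlockDiag A B *ᵥ Fin.append u w = Fin.append (A *ᵥ u) (B *ᵥ w) := by
  funext i
  induction i using Fin.addCases <;> simp [mulVec, dotProduct, Fin.sum_univ_add]

lemma matSupp_finBlockDiag (A : Matrix (Fin a) (Fin b) ℝ) (B : Matrix (Fin c) (Fin e) ℝ) :
    matSupp (finBlockDiag A B) = matSupp A + matSupp B := by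
  simp [matSupp_eq_sum_vecSupp, Fin.sum_univ_add, vecSupp_append]

lemma abs_finBlockDiag_le {r : ℝ} (hr : 0 ≤ r) {A : Matrix (Fin a) (Fin b) ℝ}
    {B : Matrix (Fin c) (Fin e) ℝ} (hA : ∀ i j, |A i j| ≤ r) (hB : ∀ i j, |B i j| ≤ r)
    (i : Fin (a + c)) (j : Fin (b + e)) : |finBlockDiag A B i j| ≤ r := by
  induction i using Fin.addCases <;> simp only [finBlockDiag_castAdd, finBlockDiag_natAdd] <;>
    exact abs_append_le (by simp [hA, hr]) (by simp [hB, hr]) j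

end FinBlocks

section Parallel

variable {p p' : ℕ → ℕ}

def parallelWidth (p p' : ℕ → ℕ) (l : ℕ) : ℕ :=
  if l = 0 then p 0 else p l + p' l

def parallelWeights (h : p' 0 = p 0) (W : ∀ l : ℕ, Matrix (Fin (p (l + 1))) (Fin (p l)) ℝ)
    (W' : ∀ l : ℕ, Matrix (Fin (p' (l + 1))) (Fin (p' l)) ℝ) :
    ∀ l : ℕ, Matrix (Fin (parallelWidth p p' (l + 1))) (Fin (parallelWidth p p' l)) ℝ
  | 0 => finStack (W 0) ((W' 0).submatrix id (Fin.cast h.symm))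
  | l + 1 => finBlockDiag (W (l + 1)) (W' (l + 1))

/-- The shift at layer `0` is never used by a network. -/
def parallelShifts (v : ∀ l : ℕ, Fin (p l) → ℝ) (v' : ∀ l : ℕ, Fin (p' l) → ℝ) :
    ∀ l : ℕ, Fin (parallelWidth p p' l) → ℝ
  | 0 => 0
  | l + 1 => Fin.append (v (l + 1)) (v' (l + 1))

variable {L : ℕ} (h : p' 0 = p 0)
  {W : ∀ l : ℕ, Matrix (Fin (p (l + 1))) (Fin (p l)) ℝ}
  {W' : ∀ l : ℕ, Matrix (Fin (p' (l + 1))) (Fin (p' l)) ℝ}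
  {v : ∀ l : ℕ, Fin (p l) → ℝ} {v' : ∀ l : ℕ, Fin (p' l) → ℝ}

lemma netEval_parallel (x : Fin (p 0) → ℝ) (n : ℕ) :
    netEval (parallelWidth p p') (parallelWeights h W W') (parallelShifts v v') n x
      = Fin.append (netEval p W v n x) (netEval p' W' v' n (x ∘ Fin.cast h)) := by
  induction n with
  | zero => exact (finStack_mulVec _ _ x).trans (congrArg _ (submatrix_cast_mulVec h _ x))
  | succ n ih =>
    simp only [netEval, ih, parallelWeights, parallelShifts, ← finBlockDiag_mulVec_append]
    congr 1
    funext i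
    induction i using Fin.addCases <;> simp

lemma NetParamsOK.parallel (hf : NetParamsOK L p W v) (hg : NetParamsOK L p' W' v') :
    NetParamsOK L (parallelWidth p p') (parallelWeights h W W') (parallelShifts v v') := by
  refine ⟨fun l hl => ?_, fun l hl1 hlL => ?_⟩
  · cases l with
    | zero => exact abs_finStack_le (hf.1 0 hl) (fun i j => hg.1 0 hl i _)
    | succ l => exact abs_finBlockDiag_le zero_le_one (hf.1 _ hl) (hg.1 _ hl)
  · obtain ⟨l, rfl⟩ := Nat.exists_eq_add_of_le' hl1
    exact abs_append_le (hf.2 _ hl1 hlL) (hg.2 _ hl1 hlL)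

lemma netSparsity_parallel :
    netSparsity L (parallelWidth p p') (parallelWeights h W W') (parallelShifts v v')
      = netSparsity L p W v + netSparsity L p' W' v' := by
  have hW : ∀ l, matSupp (parallelWeights h W W' l) = matSupp (W l) + matSupp (W' l)
    | 0 => (matSupp_finStack _ _).trans (congrArg _ (matSupp_submatrix_cast h _))
    | l + 1 => matSupp_finBlockDiag _ _
  have hv : ∀ l ∈ Icc 1 L, vecSupp (parallelShifts v v' l) = vecSupp (v l) + vecSupp (v' l) := by
    rintro (_ | l) hl
    · simp at hl
    · exact vecSupp_append _ _
  simp only [netSparsity, hW, sum_congr rfl hv, sum_add_distrib]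
  ring

end Parallel

/-- Parallelization: if `f ∈ ℱ(L, p, s)` and `g ∈ ℱ(L, p', s')` with the same input
dimension, then `x ↦ (f(x), g(x))` belongs to
`ℱ(L, (p_0, p_1 + p'_1, …, p_{L+1} + p'_{L+1}), s + s')`. -/
theorem netClass_parallel (L d k k' s s' : ℕ) (p p' : ℕ → ℕ)
    (f : (Fin d → ℝ) → Fin k → ℝ) (g : (Fin d → ℝ) → Fin k' → ℝ)
    (hf : f ∈ NetClass L d k p s) (hg : g ∈ NetClass L d k' p' s') :
    (fun x => Fin.append (f x) (g x))
      ∈ NetClass L d (k + k') (fun l => if l = 0 then d else p l + p' l) (s + s') := by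
  obtain ⟨rfl, rfl, W, v, hWv, hs, hf⟩ := hf
  obtain ⟨h0', rfl, W', v', hWv', hs', hg⟩ := hg
  refine ⟨rfl, rfl, parallelWeights h0' W W', parallelShifts v v', hWv.parallel h0' hWv',
    (netSparsity_parallel h0').trans_le (add_le_add hs hs'), fun x => ?_⟩
  exact (congrArg₂ Fin.append (hf x) (hg x)).trans (netEval_parallel h0' x L).symm
end

section
/- Removing superfluous units: for any architecture, ℱ(L, p, s) = ℱ(L, (p_0, p_1 ∧ s, p_2 ∧ s, …, p_L ∧ s, p_{L+1}), s), i.e., capping each hidden-layer width at the sparsity s does not change the function class. -/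
/-!
In an `s`-sparse network at most `s` units of a hidden layer have a non-zero incoming weight or
a non-zero shift. Every other unit outputs `max (0 - 0) 0 = 0`, so deleting it (restricting the
parameters along an embedding of the live units) does not change the computed function.
Conversely, a network on narrower layers is realised on wider ones by padding with such dead
units, i.e. extending its parameters by zero. Neither operation increases the number of non-zero
parameters or their sizes.
-/

open Finset

open Function Matrix

theorem Matrix.submatrix_mulVec_comp_of_support_subset_range {R m m' n n' : Type*}
    [NonUnitalNonAssocSemiring R] [Fintype n] [Fintype n'] (M : Matrix m n R) (r : m' → m)
    {c : n' → n} (hc : Injective c) {h : n → R} (hh : support h ⊆ Set.range c) :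
    M.submatrix r c *ᵥ (h ∘ c) = (M *ᵥ h) ∘ r := by
  funext i
  refine Fintype.sum_of_injective c hc _ _ (fun j hj => ?_) fun _ => rfl
  rw [notMem_support.mp fun hj' => hj (hh hj'), mul_zero]

theorem Set.ncard_support_comp_le {α β M : Type*} [Zero M] [Finite β] {f : α → β}
    (hf : Injective f) (g : β → M) : (support (g ∘ f)).ncard ≤ (support g).ncard := by
  rw [support_comp_eq_preimage, ← Set.ncard_image_of_injective _ hf]
  exact Set.ncard_le_ncard (Set.image_preimage_subset f _)

theorem Set.ncard_support_extend_zero_le {α β M : Type*} [Zero M] [Finite α] (f : α → β)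
    (g : α → M) : (support (extend f g 0)).ncard ≤ (support g).ncard :=
  (Set.ncard_le_ncard support_extend_zero_subset (Set.toFinite _)).trans Set.ncard_image_le

theorem Fin.exists_injective_subset_range {m n : ℕ} {S : Set (Fin n)} (hS : S.ncard ≤ m)
    (hm : m ≤ n) : ∃ e : Fin m → Fin n, Injective e ∧ S ⊆ Set.range e := by
  classical
  obtain ⟨t, hSt, ht⟩ := Finset.exists_superset_card_eq (s := S.toFinset) (n := m)
    (by rwa [← Set.ncard_eq_toFinset_card']) (by simpa using hm)
  refine ⟨t.orderEmbOfFin ht, (t.orderEmbOfFin ht).injective, ?_⟩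
  rw [Finset.range_orderEmbOfFin]
  exact fun i hi => hSt (Set.mem_toFinset.mpr hi)

theorem abs_extend_zero_le {α β : Type*} {f : α → β} {g : α → ℝ} {c : ℝ} (hc : 0 ≤ c)
    (hg : ∀ a, |g a| ≤ c) (b : β) : |extend f g 0 b| ≤ c := by
  classical
  by_cases h : ∃ a, f a = b
  · rw [extend_def, dif_pos h]
    exact hg _
  · rwa [extend_apply' _ _ _ h, Pi.zero_apply, abs_zero]

theorem matSupp_eq_ncard {m n : ℕ} (A : Matrix (Fin m) (Fin n) ℝ) :
    matSupp A = (support (uncurry A)).ncard := by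
  rw [matSupp, ← Set.ncard_coe_finset]
  congr
  ext
  simp [uncurry]

theorem vecSupp_eq_ncard {n : ℕ} (u : Fin n → ℝ) : vecSupp u = (support u).ncard := by
  rw [vecSupp, ← Set.ncard_coe_finset]
  congr
  ext
  simp

/-- Units outside this set have zero incoming weights and zero shift, hence constant output 0. -/
def liveUnits {m n : ℕ} (A : Matrix (Fin m) (Fin n) ℝ) (b : Fin m → ℝ) : Set (Fin m) :=
  {i | A i ≠ 0 ∨ b i ≠ 0}

theorem ncard_liveUnits_le {m n : ℕ} (A : Matrix (Fin m) (Fin n) ℝ) (b : Fin m → ℝ) :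
    (liveUnits A b).ncard ≤ matSupp A + vecSupp b := by
  have hsub : liveUnits A b ⊆ Prod.fst '' support (uncurry A) ∪ support b := by
    rintro i (hrow | hb)
    · obtain ⟨j, hj⟩ := Function.ne_iff.mp hrow
      exact Or.inl ⟨(i, j), hj, rfl⟩
    · exact Or.inr hb
  rw [matSupp_eq_ncard, vecSupp_eq_ncard]
  calc (liveUnits A b).ncard
      ≤ (Prod.fst '' support (uncurry A) ∪ support b).ncard := Set.ncard_le_ncard hsub
    _ ≤ (Prod.fst '' support (uncurry A)).ncard + (support b).ncard := Set.ncard_union_le _ _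
    _ ≤ (support (uncurry A)).ncard + (support b).ncard := by gcongr; exact Set.ncard_image_le

theorem support_relu_netEval_subset_liveUnits (p : ℕ → ℕ)
    (W : ∀ l : ℕ, Matrix (Fin (p (l + 1))) (Fin (p l)) ℝ) (v : ∀ l : ℕ, Fin (p l) → ℝ)
    (l : ℕ) (x : Fin (p 0) → ℝ) :
    support (fun i => max (netEval p W v l x i - v (l + 1) i) 0) ⊆
      liveUnits (W l) (v (l + 1)) := by
  intro i hi
  by_contra hdead
  simp only [liveUnits, Set.mem_ofPred_eq, not_or, not_not] at hdead
  have hzero : netEval p W v l x i = 0 := by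
    cases l <;> simp [netEval, Matrix.mulVec, hdead.1]
  simp [hzero, hdead.2] at hi

theorem ncard_liveUnits_le_netSparsity {L m : ℕ} (p : ℕ → ℕ)
    (W : ∀ l : ℕ, Matrix (Fin (p (l + 1))) (Fin (p l)) ℝ) (v : ∀ l : ℕ, Fin (p l) → ℝ)
    (hm : m < L) : (liveUnits (W m) (v (m + 1))).ncard ≤ netSparsity L p W v :=
  (ncard_liveUnits_le _ _).trans <| add_le_add
    (single_le_sum (f := fun l => matSupp (W l)) (fun _ _ => Nat.zero_le _)
      (mem_range.mpr (by omega)))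
    (single_le_sum (f := fun l => vecSupp (v l)) (fun _ _ => Nat.zero_le _)
      (mem_Icc.mpr ⟨by omega, by omega⟩))

section Restrict

/- `ι l` embeds the units of layer `l` of the architecture `q` into those of layer `l` of `p`. -/
variable {p q : ℕ → ℕ} (ι : ∀ l, Fin (q l) → Fin (p l))

def restrictWeights (W : ∀ l : ℕ, Matrix (Fin (p (l + 1))) (Fin (p l)) ℝ) :
    ∀ l : ℕ, Matrix (Fin (q (l + 1))) (Fin (q l)) ℝ :=
  fun l => (W l).submatrix (ι (l + 1)) (ι l)

def restrictShifts (v : ∀ l : ℕ, Fin (p l) → ℝ) : ∀ l : ℕ, Fin (q l) → ℝ :=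
  fun l => v l ∘ ι l

noncomputable def extendWeights (W : ∀ l : ℕ, Matrix (Fin (q (l + 1))) (Fin (q l)) ℝ) :
    ∀ l : ℕ, Matrix (Fin (p (l + 1))) (Fin (p l)) ℝ :=
  fun l => curry (extend (Prod.map (ι (l + 1)) (ι l)) (uncurry (W l)) 0)

noncomputable def extendShifts (v : ∀ l : ℕ, Fin (q l) → ℝ) : ∀ l : ℕ, Fin (p l) → ℝ :=
  fun l => extend (ι l) (v l) 0

variable {ι}

theorem restrictWeights_extendWeights (hι : ∀ l, Injective (ι l))
    (W : ∀ l : ℕ, Matrix (Fin (q (l + 1))) (Fin (q l)) ℝ) :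
    restrictWeights ι (extendWeights ι W) = W := by
  funext l i j
  exact ((hι _).prodMap (hι l)).extend_apply _ _ (i, j)

theorem restrictShifts_extendShifts (hι : ∀ l, Injective (ι l)) (v : ∀ l : ℕ, Fin (q l) → ℝ) :
    restrictShifts ι (extendShifts ι v) = v := by
  funext l i
  exact (hι l).extend_apply _ _ i

theorem liveUnits_extend_subset_range (W : ∀ l : ℕ, Matrix (Fin (q (l + 1))) (Fin (q l)) ℝ)
    (v : ∀ l : ℕ, Fin (q l) → ℝ) (l : ℕ) :
    liveUnits (extendWeights ι W l) (extendShifts ι v (l + 1)) ⊆ Set.range (ι (l + 1)) := by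
  intro i hi
  by_contra hout
  have hrow : extendWeights ι W l i = 0 := funext fun j =>
    extend_apply' _ _ (i, j) fun ⟨⟨a, b⟩, hab⟩ => hout ⟨a, congrArg Prod.fst hab⟩
  have hshift : extendShifts ι v (l + 1) i = 0 := extend_apply' _ _ i fun h => hout h
  simp [liveUnits, hrow, hshift] at hi

theorem netEval_restrict (L : ℕ) (W : ∀ l : ℕ, Matrix (Fin (p (l + 1))) (Fin (p l)) ℝ)
    (v : ∀ l : ℕ, Fin (p l) → ℝ) (hι : ∀ l, Injective (ι l)) (hι0 : Surjective (ι 0))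
    (hlive : ∀ l < L, liveUnits (W l) (v (l + 1)) ⊆ Set.range (ι (l + 1)))
    (x : Fin (p 0) → ℝ) : ∀ l ≤ L,
    netEval q (restrictWeights ι W) (restrictShifts ι v) l (x ∘ ι 0) =
      netEval p W v l x ∘ ι (l + 1)
  | 0, _ => (W 0).submatrix_mulVec_comp_of_support_subset_range _ (hι 0)
      (by simp [hι0.range_eq])
  | l + 1, hl => by
    have ih := netEval_restrict L W v hι hι0 hlive x l (by omega)
    have hsupp := (support_relu_netEval_subset_liveUnits p W v l x).trans (hlive l (by omega))
    simp only [netEval, ih]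
    exact (W (l + 1)).submatrix_mulVec_comp_of_support_subset_range _ (hι (l + 1)) hsupp

theorem NetParamsOK.restrict {L : ℕ} {W : ∀ l : ℕ, Matrix (Fin (p (l + 1))) (Fin (p l)) ℝ}
    {v : ∀ l : ℕ, Fin (p l) → ℝ} (h : NetParamsOK L p W v) :
    NetParamsOK L q (restrictWeights ι W) (restrictShifts ι v) :=
  ⟨fun l hl _ _ => h.1 l hl _ _, fun l h1 hL _ => h.2 l h1 hL _⟩

theorem NetParamsOK.extend {L : ℕ} {W : ∀ l : ℕ, Matrix (Fin (q (l + 1))) (Fin (q l)) ℝ}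
    {v : ∀ l : ℕ, Fin (q l) → ℝ} (h : NetParamsOK L q W v) :
    NetParamsOK L p (extendWeights ι W) (extendShifts ι v) :=
  ⟨fun l hl i j =>
      abs_extend_zero_le (g := uncurry (W l)) zero_le_one (fun ab => h.1 l hl ab.1 ab.2) (i, j),
    fun l h1 hL i => abs_extend_zero_le zero_le_one (h.2 l h1 hL) i⟩

theorem netSparsity_restrict_le (hι : ∀ l, Injective (ι l)) (L : ℕ)
    (W : ∀ l : ℕ, Matrix (Fin (p (l + 1))) (Fin (p l)) ℝ) (v : ∀ l : ℕ, Fin (p l) → ℝ) :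
    netSparsity L q (restrictWeights ι W) (restrictShifts ι v) ≤ netSparsity L p W v := by
  unfold netSparsity
  gcongr with l _ l _
  · simp only [matSupp_eq_ncard]
    exact Set.ncard_support_comp_le ((hι _).prodMap (hι l)) (uncurry (W l))
  · simp only [vecSupp_eq_ncard]
    exact Set.ncard_support_comp_le (hι l) (v l)

theorem netSparsity_extend_le (L : ℕ) (W : ∀ l : ℕ, Matrix (Fin (q (l + 1))) (Fin (q l)) ℝ)
    (v : ∀ l : ℕ, Fin (q l) → ℝ) :
    netSparsity L p (extendWeights ι W) (extendShifts ι v) ≤ netSparsity L q W v := by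
  unfold netSparsity
  gcongr with l _ l _
  · simp only [matSupp_eq_ncard]
    exact Set.ncard_support_extend_zero_le _ _
  · simp only [vecSupp_eq_ncard]
    exact Set.ncard_support_extend_zero_le _ _

end Restrict

theorem netEval_restrict_cast {p q : ℕ → ℕ} {ι : ∀ l, Fin (q l) → Fin (p l)} {L d k : ℕ}
    (W : ∀ l : ℕ, Matrix (Fin (p (l + 1))) (Fin (p l)) ℝ) (v : ∀ l : ℕ, Fin (p l) → ℝ)
    (hι : ∀ l, Injective (ι l)) (hι0 : ∀ i, (ι 0 i : ℕ) = i) (hιL : ∀ i, (ι (L + 1) i : ℕ) = i)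
    (hlive : ∀ l < L, liveUnits (W l) (v (l + 1)) ⊆ Set.range (ι (l + 1)))
    (h0 : p 0 = d) (h1 : p (L + 1) = k) (h0' : q 0 = d) (h1' : q (L + 1) = k)
    (x : Fin d → ℝ) (j : Fin k) :
    netEval q (restrictWeights ι W) (restrictShifts ι v) L (fun i => x (Fin.cast h0' i))
        (Fin.cast h1'.symm j) =
      netEval p W v L (fun i => x (Fin.cast h0 i)) (Fin.cast h1.symm j) := by
  have hsurj : Surjective (ι 0) := fun y => ⟨Fin.cast (h0.trans h0'.symm) y, Fin.ext (hι0 _)⟩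
  have hx : (fun i => x (Fin.cast h0' i)) = (fun i => x (Fin.cast h0 i)) ∘ ι 0 :=
    funext fun i => congrArg x (Fin.ext (hι0 i).symm)
  have hj : Fin.cast h1.symm j = ι (L + 1) (Fin.cast h1'.symm j) :=
    Fin.ext (hιL (Fin.cast h1'.symm j)).symm
  rw [hx, hj, netEval_restrict L W v hι hsurj hlive _ L le_rfl]
  rfl

theorem netClass_subset_of_le {L d k s : ℕ} {p q : ℕ → ℕ} (hle : ∀ l, q l ≤ p l)
    (h0 : q 0 = p 0) (hL : q (L + 1) = p (L + 1)) :
    NetClass L d k q s ⊆ NetClass L d k p s := by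
  rintro f ⟨hq0, hq1, W, v, hOK, hsp, hf⟩
  let ι : ∀ l, Fin (q l) → Fin (p l) := fun l => Fin.castLE (hle l)
  have hι : ∀ l, Injective (ι l) := fun l => Fin.castLE_injective _
  refine ⟨h0.symm.trans hq0, hL.symm.trans hq1, extendWeights ι W, extendShifts ι v, hOK.extend,
    (netSparsity_extend_le L W v).trans hsp, fun x => funext fun j => ?_⟩
  have := netEval_restrict_cast (extendWeights ι W) (extendShifts ι v) hι (fun _ => rfl)
    (fun _ => rfl) (fun l _ => liveUnits_extend_subset_range W v l) (h0.symm.trans hq0)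
    (hL.symm.trans hq1) hq0 hq1 x j
  rw [restrictWeights_extendWeights hι, restrictShifts_extendShifts hι] at this
  rw [hf x]
  exact this

theorem netClass_subset_of_min_le {L d k s : ℕ} {p q : ℕ → ℕ} (hle : ∀ l, q l ≤ p l)
    (h0 : q 0 = p 0) (hL : q (L + 1) = p (L + 1))
    (hs : ∀ l, 1 ≤ l → l ≤ L → min (p l) s ≤ q l) :
    NetClass L d k p s ⊆ NetClass L d k q s := by
  rintro f ⟨hp0, hp1, W, v, hOK, hsp, hf⟩
  -- The output layer is embedded coordinatewise, to match the casts in `NetClass`.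
  have hcover : ∀ m, ∃ e : Fin (q (m + 1)) → Fin (p (m + 1)), Injective e ∧
      (m < L → liveUnits (W m) (v (m + 1)) ⊆ Set.range e) ∧ (m = L → ∀ i, (e i : ℕ) = i) := by
    intro m
    by_cases hm : m < L
    · have hcard : (liveUnits (W m) (v (m + 1))).ncard ≤ q (m + 1) :=
        (le_min ((Set.ncard_le_card _).trans_eq (Nat.card_fin _))
          ((ncard_liveUnits_le_netSparsity p W v hm).trans hsp)).trans (hs (m + 1) (by omega) hm)
      obtain ⟨e, he, hcov⟩ := Fin.exists_injective_subset_range hcard (hle _)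
      exact ⟨e, he, fun _ => hcov, fun h => absurd h hm.ne⟩
    · exact ⟨Fin.castLE (hle _), Fin.castLE_injective _, fun h => absurd h hm, fun _ _ => rfl⟩
  choose E hE hElive hEL using hcover
  let ι : ∀ l, Fin (q l) → Fin (p l)
    | 0 => Fin.castLE (hle 0)
    | m + 1 => E m
  have hι : ∀ l, Injective (ι l)
    | 0 => Fin.castLE_injective _
    | m + 1 => hE m
  refine ⟨h0.trans hp0, hL.trans hp1, restrictWeights ι W, restrictShifts ι v, hOK.restrict,
    (netSparsity_restrict_le hι L W v).trans hsp, fun x => funext fun j => ?_⟩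
  rw [hf x]
  exact (netEval_restrict_cast W v hι (fun _ => rfl) (hEL L rfl) hElive hp0 hp1
    (h0.trans hp0) (hL.trans hp1) x j).symm

/-- Removing superfluous units: capping every hidden-layer width at the sparsity `s`
does not change the network class:
`ℱ(L, p, s) = ℱ(L, (p_0, p_1 ∧ s, …, p_L ∧ s, p_{L+1}), s)`. -/
theorem netClass_remove_units (L d k s : ℕ) (p : ℕ → ℕ) :
    NetClass L d k p s
      = NetClass L d k (fun l => if l = 0 ∨ l = L + 1 then p l else min (p l) s) s := by
  set q : ℕ → ℕ := fun l => if l = 0 ∨ l = L + 1 then p l else min (p l) s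
  have hle : ∀ l, q l ≤ p l := fun l => by dsimp only [q]; split_ifs <;> simp
  have h0 : q 0 = p 0 := by simp [q]
  have hL : q (L + 1) = p (L + 1) := by simp [q]
  have hs : ∀ l, 1 ≤ l → l ≤ L → min (p l) s ≤ q l := fun l h1 hl => by
    rw [show q l = min (p l) s from if_neg (by omega)]
  exact (netClass_subset_of_min_le hle h0 hL hs).antisymm (netClass_subset_of_le hle h0 hL)
end

section
/- For any positive integer m, there exists a ReLU network Mult_m ∈ ℱ(m+4, (2, 6, 6, …, 6, 1)) (depth m+4, hidden widths 6, parameters bounded by 1 in absolute value) such that Mult_m(x,y) ∈ [0,1] for all (x,y) ∈ [0,1]^2, |Mult_m(x,y) − xy| ≤ 2^{−m} for all x, y ∈ [0,1], and Mult_m(0, y) = Mult_m(x, 0) = 0 for all x, y. -/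
open Finset

/-!
Yarotsky's construction. With the tooth function `g u = 2u - 4 relu (u - 1/2)`, the function
`Q_n u = u - ∑_{k=1}^n g^[k] u / 4^k` (`sqApprox`) satisfies `u² ≤ Q_n u ≤ u² + 4^-(n+1)` on
`[0,1]`, by induction from `Q_{n+1} u = u - g u / 2 + Q_n (g u) / 4` and
`u - g u / 2 + (g u)² / 4 = u²`. One more tooth costs one hidden layer of width 3 carrying
`(R_k, R_k, Q_k)`, where `R_k = g^[k] / 4^k` (`scaledSawtooth`), since
`R_{k+1} = R_k / 2 - relu (R_k - 2 / 4^(k+1))` and `Q_{k+1} = Q_k - R_{k+1}`.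
Two such chains, run on `a = (x+y)/2` and `b = |x-y|/2` (obtained by clipping to `[0,1]` in the
first hidden layer), give `relu (Q a - Q b)`, within `4^-(m+3)` of `a² - b² = xy`.
For `x = 0` or `y = 0` the clipped inputs satisfy `a = b` or `a = 0`, so the output is exactly `0`.
-/

open Set

namespace MultNet

noncomputable section

section NatIndexed

/- The widths `p l` are not definitionally constant in `l`, so weights, shifts and layer outputs
are handled as functions of natural-number indices, extended by zero. -/
def natVec {n : ℕ} (u : Fin n → ℝ) (i : ℕ) : ℝ := if h : i < n then u ⟨i, h⟩ else 0

def natMat {m n : ℕ} (A : Matrix (Fin m) (Fin n) ℝ) (i j : ℕ) : ℝ :=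
  if h : i < m ∧ j < n then A ⟨i, h.1⟩ ⟨j, h.2⟩ else 0

lemma abs_natVec_le_one {n : ℕ} {u : Fin n → ℝ} (h : ∀ i, |u i| ≤ 1) (i : ℕ) :
    |natVec u i| ≤ 1 := by
  unfold natVec; split_ifs
  · exact h _
  · simp

lemma abs_natMat_le_one {m n : ℕ} {A : Matrix (Fin m) (Fin n) ℝ} (h : ∀ i j, |A i j| ≤ 1)
    (i j : ℕ) : |natMat A i j| ≤ 1 := by
  unfold natMat; split_ifs
  · exact h _ _
  · simp

def linLayer (n : ℕ) (w : ℕ → ℕ → ℝ) (z : ℕ → ℝ) (i : ℕ) : ℝ :=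
  ∑ j ∈ range n, w i j * z j

def reluLayer (n : ℕ) (w : ℕ → ℕ → ℝ) (v z : ℕ → ℝ) : ℕ → ℝ :=
  linLayer n w fun j => max (z j - v j) 0

lemma netEval_eq_of_layers {p : ℕ → ℕ} (w : ℕ → ℕ → ℕ → ℝ) (v s : ℕ → ℕ → ℝ)
    (x : ℕ → ℝ) {L : ℕ} (h_input : ∀ i < p 1, linLayer (p 0) (w 0) x i = s 0 i)
    (h_layer : ∀ l < L, ∀ i < p (l + 2),
      reluLayer (p (l + 1)) (w (l + 1)) (v (l + 1)) (s l) i = s (l + 1) i)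
    (i : Fin (p (L + 1))) :
    netEval p (fun l i j => w l i j) (fun l i => v l i) L (fun j => x j) i = s L i := by
  induction L with
  | zero =>
    rw [← h_input i i.2, linLayer, ← Fin.sum_univ_eq_sum_range]
    rfl
  | succ L ih =>
    rw [← h_layer L (Nat.lt_succ_self L) i i.2, reluLayer, linLayer,
      ← Fin.sum_univ_eq_sum_range fun j => w (L + 1) i j * max (s L j - v (L + 1) j) 0]
    simp only [netEval, Matrix.mulVec, dotProduct]
    refine sum_congr rfl fun j _ => ?_
    rw [ih fun l hl => h_layer l (Nat.lt_succ_of_lt hl)]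

end NatIndexed

def tooth (u : ℝ) : ℝ := 2 * u - 4 * max (u - 1 / 2) 0

def scaledSawtooth (k : ℕ) (u : ℝ) : ℝ := tooth^[k] u / 4 ^ k

def sqApprox : ℕ → ℝ → ℝ
  | 0, u => u
  | n + 1, u => u - tooth u / 2 + sqApprox n (tooth u) / 4

lemma tooth_zero : tooth 0 = 0 := by norm_num [tooth]

lemma tooth_mem_Icc {u : ℝ} (hu : u ∈ Icc (0 : ℝ) 1) : tooth u ∈ Icc (0 : ℝ) 1 := by
  obtain ⟨h0, h1⟩ := hu
  rcases le_total u (1 / 2) with h | h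
  · rw [tooth, max_eq_right (by linarith)]; constructor <;> linarith
  · rw [tooth, max_eq_left (by linarith)]; constructor <;> linarith

lemma sub_tooth_add_tooth_sq (u : ℝ) : u - tooth u / 2 + tooth u ^ 2 / 4 = u ^ 2 := by
  rcases le_total u (1 / 2) with h | h
  · rw [tooth, max_eq_right (by linarith)]; ring
  · rw [tooth, max_eq_left (by linarith)]; ring

lemma iterate_tooth_mem_Icc (k : ℕ) {u : ℝ} (hu : u ∈ Icc (0 : ℝ) 1) :
    tooth^[k] u ∈ Icc (0 : ℝ) 1 := by
  induction k with
  | zero => exact hu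
  | succ k ih => rw [Function.iterate_succ_apply']; exact tooth_mem_Icc ih

lemma scaledSawtooth_nonneg (k : ℕ) {u : ℝ} (hu : u ∈ Icc (0 : ℝ) 1) :
    0 ≤ scaledSawtooth k u :=
  div_nonneg (iterate_tooth_mem_Icc k hu).1 (by positivity)

lemma scaledSawtooth_tooth (k : ℕ) (u : ℝ) :
    scaledSawtooth k (tooth u) / 4 = scaledSawtooth (k + 1) u := by
  rw [scaledSawtooth, scaledSawtooth, Function.iterate_succ_apply, pow_succ, div_div]

lemma scaledSawtooth_succ (k : ℕ) (u : ℝ) :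
    scaledSawtooth (k + 1) u =
      scaledSawtooth k u / 2 - max (scaledSawtooth k u - 2 / 4 ^ (k + 1)) 0 := by
  have h4 : (0 : ℝ) < 4 ^ k := by positivity
  have hmax : max (tooth^[k] u - 1 / 2) 0 / 4 ^ k
      = max (tooth^[k] u / 4 ^ k - 2 / 4 ^ (k + 1)) 0 := by
    rw [← max_div_div_right h4.le, zero_div, pow_succ]
    congr 1
    field_simp
    ring
  rw [scaledSawtooth, scaledSawtooth, Function.iterate_succ_apply', tooth, ← hmax, pow_succ]
  field_simp
  ring

lemma sqApprox_succ_eq_sub (n : ℕ) (u : ℝ) :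
    sqApprox (n + 1) u = sqApprox n u - scaledSawtooth (n + 1) u := by
  induction n generalizing u with
  | zero =>
    rw [← scaledSawtooth_tooth]
    simp only [sqApprox, scaledSawtooth, Function.iterate_zero, id, pow_zero, div_one]
    ring
  | succ n ih =>
    rw [sqApprox, ih (tooth u), ← scaledSawtooth_tooth (n + 1) u, sqApprox]
    ring

lemma sqApprox_mem_Icc (n : ℕ) {u : ℝ} (hu : u ∈ Icc (0 : ℝ) 1) :
    sqApprox n u ∈ Icc (u ^ 2) (u ^ 2 + (1 / 4) ^ (n + 1)) := by
  induction n generalizing u with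
  | zero =>
    obtain ⟨h0, h1⟩ := hu
    constructor <;> simp only [sqApprox] <;> nlinarith [sq_nonneg (u - 1 / 2)]
  | succ n ih =>
    obtain ⟨hlo, hhi⟩ := ih (tooth_mem_Icc hu)
    have hsq := sub_tooth_add_tooth_sq u
    rw [sqApprox, pow_succ _ (n + 1)]
    constructor <;> linarith

lemma sqApprox_nonneg (n : ℕ) {u : ℝ} (hu : u ∈ Icc (0 : ℝ) 1) : 0 ≤ sqApprox n u :=
  (sq_nonneg u).trans (sqApprox_mem_Icc n hu).1

lemma sqApprox_le_self (n : ℕ) {u : ℝ} (hu : u ∈ Icc (0 : ℝ) 1) : sqApprox n u ≤ u := by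
  induction n with
  | zero => exact le_rfl
  | succ n ih =>
    rw [sqApprox_succ_eq_sub]
    linarith [scaledSawtooth_nonneg (n + 1) hu]

lemma sqApprox_zero (n : ℕ) : sqApprox n 0 = 0 := by
  induction n with
  | zero => rfl
  | succ n ih => rw [sqApprox, tooth_zero, ih]; ring

def diffSqApprox (n : ℕ) (a b : ℝ) : ℝ := max (sqApprox n a - sqApprox n b) 0

lemma diffSqApprox_mem_Icc (n : ℕ) {a b : ℝ} (ha : a ∈ Icc (0 : ℝ) 1)
    (hb : b ∈ Icc (0 : ℝ) 1) : diffSqApprox n a b ∈ Icc (0 : ℝ) 1 :=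
  ⟨le_max_right _ _, max_le (by linarith [sqApprox_le_self n ha, sqApprox_nonneg n hb, ha.2])
    zero_le_one⟩

lemma abs_diffSqApprox_sub_le (n : ℕ) {a b : ℝ} (ha : a ∈ Icc (0 : ℝ) 1)
    (hb : b ∈ Icc (0 : ℝ) 1) (hba : b ≤ a) :
    |diffSqApprox n a b - (a ^ 2 - b ^ 2)| ≤ (1 / 4) ^ (n + 1) := by
  have hsq : 0 ≤ a ^ 2 - b ^ 2 := by nlinarith [hb.1]
  obtain ⟨ha₁, ha₂⟩ := sqApprox_mem_Icc n ha
  obtain ⟨hb₁, hb₂⟩ := sqApprox_mem_Icc n hb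
  calc |diffSqApprox n a b - (a ^ 2 - b ^ 2)|
      = |max (sqApprox n a - sqApprox n b) 0 - max (a ^ 2 - b ^ 2) 0| := by
        rw [diffSqApprox, max_eq_left hsq]
    _ ≤ |sqApprox n a - sqApprox n b - (a ^ 2 - b ^ 2)| := abs_max_sub_max_le_abs _ _ _
    _ ≤ (1 / 4) ^ (n + 1) := abs_le.2 ⟨by linarith, by linarith⟩

lemma diffSqApprox_eq_zero (n : ℕ) {a b : ℝ} (hb : b ∈ Icc (0 : ℝ) 1) (h : a = b ∨ a = 0) :
    diffSqApprox n a b = 0 := by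
  rcases h with rfl | rfl
  · rw [diffSqApprox, sub_self, max_self]
  · rw [diffSqApprox, sqApprox_zero, zero_sub]
    exact max_eq_right (neg_nonpos.2 (sqApprox_nonneg n hb))

def clip (t : ℝ) : ℝ := max t 0 - max (t - 1) 0

def clipAbs (t : ℝ) : ℝ := clip t + clip (-t)

lemma clip_of_nonpos {t : ℝ} (ht : t ≤ 0) : clip t = 0 := by
  rw [clip, max_eq_right ht, max_eq_right (by linarith), sub_self]

lemma clip_of_mem_Icc {t : ℝ} (ht : t ∈ Icc (0 : ℝ) 1) : clip t = t := by
  rw [clip, max_eq_left ht.1, max_eq_right (by linarith [ht.2]), sub_zero]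

lemma clip_mem_Icc (t : ℝ) : clip t ∈ Icc (0 : ℝ) 1 := by
  rcases le_total t 0 with h | h
  · rw [clip_of_nonpos h]; exact ⟨le_rfl, zero_le_one⟩
  rcases le_total t 1 with h' | h'
  · rw [clip_of_mem_Icc ⟨h, h'⟩]; exact ⟨h, h'⟩
  · rw [clip, max_eq_left h, max_eq_left (by linarith)]; norm_num

lemma clipAbs_neg (t : ℝ) : clipAbs (-t) = clipAbs t := by
  rw [clipAbs, clipAbs, neg_neg, add_comm]

lemma clipAbs_of_nonneg {t : ℝ} (ht : 0 ≤ t) : clipAbs t = clip t := by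
  rw [clipAbs, clip_of_nonpos (neg_nonpos.2 ht), add_zero]

lemma clipAbs_mem_Icc (t : ℝ) : clipAbs t ∈ Icc (0 : ℝ) 1 := by
  rcases le_total 0 t with h | h
  · rw [clipAbs_of_nonneg h]; exact clip_mem_Icc t
  · rw [← clipAbs_neg, clipAbs_of_nonneg (neg_nonneg.2 h)]; exact clip_mem_Icc _

lemma clipAbs_of_abs_le_one {t : ℝ} (ht : |t| ≤ 1) : clipAbs t = |t| := by
  rcases le_total 0 t with h | h
  · rw [clipAbs_of_nonneg h, abs_of_nonneg h, clip_of_mem_Icc ⟨h, (le_abs_self t).trans ht⟩]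
  · rw [← clipAbs_neg, clipAbs_of_nonneg (neg_nonneg.2 h), abs_of_nonpos h,
      clip_of_mem_Icc ⟨neg_nonneg.2 h, (neg_le_abs t).trans ht⟩]

lemma clip_eq_clipAbs_or_eq_zero (t : ℝ) : clip t = clipAbs t ∨ clip t = 0 := by
  rcases le_total 0 t with h | h
  · exact Or.inl (clipAbs_of_nonneg h).symm
  · exact Or.inr (clip_of_nonpos h)

section Layers

def firstLayer : Matrix (Fin 6) (Fin 2) ℝ :=
  !![1/2, 1/2; 1/2, 1/2; 1/2, -1/2; -1/2, 1/2; 1/2, -1/2; -1/2, 1/2]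

def clipLayer : Matrix (Fin 6) (Fin 6) ℝ :=
  !![1, -1, 0, 0, 0, 0;
     1, -1, 0, 0, 0, 0;
     1, -1, 0, 0, 0, 0;
     0, 0, 1, 1, -1, -1;
     0, 0, 1, 1, -1, -1;
     0, 0, 1, 1, -1, -1]

def squaringLayer : Matrix (Fin 6) (Fin 6) ℝ :=
  !![1/2, -1, 0, 0, 0, 0;
     1/2, -1, 0, 0, 0, 0;
     -1/2, 1, 1, 0, 0, 0;
     0, 0, 0, 1/2, -1, 0;
     0, 0, 0, 1/2, -1, 0;
     0, 0, 0, -1/2, 1, 1]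

def differenceLayer : Matrix (Fin 1) (Fin 6) ℝ := !![-1/2, 1, 1, 1/2, -1, -1]

def outputLayer : Matrix (Fin 1) (Fin 6) ℝ := !![1, 0, 0, 0, 0, 0]

-- `R_k ≥ 0` is carried twice: one copy passes the next ReLU unchanged, the other is shifted.
def squaringState (k : ℕ) (a b : ℝ) : ℕ → ℝ :=
  natVec ![scaledSawtooth k a, scaledSawtooth k a, sqApprox k a,
    scaledSawtooth k b, scaledSawtooth k b, sqApprox k b]

def sawtoothShift (k : ℕ) : ℕ → ℝ := natVec ![0, 2 / 4 ^ (k + 1), 0, 0, 2 / 4 ^ (k + 1), 0]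

lemma linLayer_firstLayer (x y : ℝ) {i : ℕ} (hi : i < 6) :
    linLayer 2 (natMat firstLayer) (natVec ![x, y]) i =
      natVec ![x / 2 + y / 2, x / 2 + y / 2, x / 2 - y / 2, -(x / 2 - y / 2),
        x / 2 - y / 2, -(x / 2 - y / 2)] i := by
  interval_cases i <;> simp [linLayer, natMat, natVec, firstLayer, sum_range_succ] <;> ring

lemma reluLayer_clipLayer (s d : ℝ) {i : ℕ} (hi : i < 6) :
    reluLayer 6 (natMat clipLayer) (natVec ![0, 1, 0, 0, 1, 1])
      (natVec ![s, s, d, -d, d, -d]) i = squaringState 0 (clip s) (clipAbs d) i := by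
  interval_cases i <;>
    simp [reluLayer, linLayer, natMat, natVec, clipLayer, squaringState, scaledSawtooth,
      sqApprox, clipAbs, clip, sum_range_succ, -max_zero_add_max_neg_zero_eq_abs_self] <;>
    ring

lemma reluLayer_squaringLayer (k : ℕ) {a b : ℝ} (ha : a ∈ Icc (0 : ℝ) 1)
    (hb : b ∈ Icc (0 : ℝ) 1) {i : ℕ} (hi : i < 6) :
    reluLayer 6 (natMat squaringLayer) (sawtoothShift k) (squaringState k a b) i
      = squaringState (k + 1) a b i := by
  have hRa := scaledSawtooth_nonneg k ha
  have hRb := scaledSawtooth_nonneg k hb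
  interval_cases i <;>
    simp [reluLayer, linLayer, natMat, natVec, squaringLayer, squaringState, sawtoothShift,
      sum_range_succ, max_eq_left hRa, max_eq_left hRb, sqApprox_nonneg k ha,
      sqApprox_nonneg k hb, scaledSawtooth_succ k, sqApprox_succ_eq_sub k] <;> ring

lemma reluLayer_differenceLayer (k : ℕ) {a b : ℝ} (ha : a ∈ Icc (0 : ℝ) 1)
    (hb : b ∈ Icc (0 : ℝ) 1) (i : ℕ) :
    reluLayer 6 (natMat differenceLayer) (sawtoothShift k) (squaringState k a b) i
      = natVec ![sqApprox (k + 1) a - sqApprox (k + 1) b] i := by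
  have hRa := scaledSawtooth_nonneg k ha
  have hRb := scaledSawtooth_nonneg k hb
  rcases Nat.eq_zero_or_pos i with rfl | hi
  · simp [reluLayer, linLayer, natMat, natVec, differenceLayer, squaringState, sawtoothShift,
      sum_range_succ, max_eq_left hRa, max_eq_left hRb, sqApprox_nonneg k ha,
      sqApprox_nonneg k hb, scaledSawtooth_succ k, sqApprox_succ_eq_sub k]
    ring
  · simp [reluLayer, linLayer, natMat, natVec, Nat.not_lt.2 hi]

lemma reluLayer_outputLayer (z : ℝ) (i : ℕ) :
    reluLayer 6 (natMat outputLayer) 0 (natVec ![z]) i = natVec ![max z 0] i := by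
  rcases Nat.eq_zero_or_pos i with rfl | hi
  · simp [reluLayer, linLayer, natMat, natVec, outputLayer, sum_range_succ]
  · simp [reluLayer, linLayer, natMat, natVec, Nat.not_lt.2 hi]

end Layers

section Network

variable (m : ℕ)

def multWidth : ℕ → ℕ := fun l => if l = 0 then 2 else if l = m + 5 then 1 else 6

def multWeight (l : ℕ) : ℕ → ℕ → ℝ :=
  if l = 0 then natMat firstLayer
  else if l = 1 then natMat clipLayer
  else if l ≤ m + 2 then natMat squaringLayer
  else if l = m + 3 then natMat differenceLayer
  else natMat outputLayer

def multShift (l : ℕ) : ℕ → ℝ :=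
  if l = 1 then natVec ![0, 1, 0, 0, 1, 1]
  else if l ≤ m + 3 then sawtoothShift (l - 2)
  else 0

def multState (x y : ℝ) (l : ℕ) : ℕ → ℝ :=
  if l = 0 then
    natVec ![x / 2 + y / 2, x / 2 + y / 2, x / 2 - y / 2, -(x / 2 - y / 2),
      x / 2 - y / 2, -(x / 2 - y / 2)]
  else if l ≤ m + 2 then squaringState (l - 1) (clip (x / 2 + y / 2)) (clipAbs (x / 2 - y / 2))
  else if l = m + 3 then
    natVec ![sqApprox (m + 2) (clip (x / 2 + y / 2)) - sqApprox (m + 2) (clipAbs (x / 2 - y / 2))]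
  else natVec ![diffSqApprox (m + 2) (clip (x / 2 + y / 2)) (clipAbs (x / 2 - y / 2))]

lemma multWidth_of_ne {l : ℕ} (h₀ : l ≠ 0) (h₅ : l ≠ m + 5) : multWidth m l = 6 := by
  simp [multWidth, h₀, h₅]

lemma multWidth_last : multWidth m (m + 5) = 1 := by simp [multWidth]

lemma abs_multWeight_le_one (l i j : ℕ) : |multWeight m l i j| ≤ 1 := by
  unfold multWeight
  split_ifs <;> refine abs_natMat_le_one (fun i j => ?_) _ _ <;>
    fin_cases i <;> fin_cases j <;>
    norm_num [firstLayer, clipLayer, squaringLayer, differenceLayer, outputLayer]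

lemma abs_multShift_le_one (l i : ℕ) : |multShift m l i| ≤ 1 := by
  unfold multShift
  split_ifs
  · exact abs_natVec_le_one (fun i => by fin_cases i <;> norm_num) _
  · have hc : 2 / 4 ^ (l - 2 + 1) ≤ (1 : ℝ) := by
      rw [div_le_one (by positivity)]
      calc (2 : ℝ) ≤ 4 ^ 1 := by norm_num
        _ ≤ 4 ^ (l - 2 + 1) := pow_le_pow_right₀ (by norm_num) (by omega)
    exact abs_natVec_le_one (fun i => by
      fin_cases i <;> simp [abs_of_pos, hc, show (0 : ℝ) < 2 / 4 ^ (l - 2 + 1) by positivity]) _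
  · simp

lemma multState_succ (x y : ℝ) {l : ℕ} (hl : l < m + 4) {i : ℕ}
    (hi : i < multWidth m (l + 2)) :
    reluLayer (multWidth m (l + 1)) (multWeight m (l + 1)) (multShift m (l + 1))
      (multState m x y l) i = multState m x y (l + 1) i := by
  have ha := clip_mem_Icc (x / 2 + y / 2)
  have hb := clipAbs_mem_Icc (x / 2 - y / 2)
  rw [multWidth_of_ne m (by omega) (by omega)]
  obtain rfl | ⟨hl₁, hl₂⟩ | rfl | rfl :
      l = 0 ∨ (1 ≤ l ∧ l ≤ m + 1) ∨ l = m + 2 ∨ l = m + 3 := by omega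
  · rw [multWidth_of_ne m (by omega) (by omega)] at hi
    simp only [multWeight, multShift, multState, if_pos, le_add_self, Nat.sub_self]
    exact reluLayer_clipLayer _ _ hi
  · rw [multWidth_of_ne m (by omega) (by omega)] at hi
    obtain ⟨k, rfl⟩ : ∃ k, l = k + 1 := ⟨l - 1, by omega⟩
    simp only [multWeight, multShift, multState, if_neg (show k + 1 + 1 ≠ 0 by omega),
      if_neg (show k + 1 + 1 ≠ 1 by omega), if_neg (show k + 1 ≠ 0 by omega),
      if_pos (show k + 1 + 1 ≤ m + 2 by omega), if_pos (show k + 1 + 1 ≤ m + 3 by omega),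
      if_pos (show k + 1 ≤ m + 2 by omega), Nat.add_sub_cancel]
    exact reluLayer_squaringLayer k ha hb hi
  · simp only [multWeight, multShift, multState, if_neg (show m + 2 + 1 ≠ 0 by omega),
      if_neg (show m + 2 + 1 ≠ 1 by omega), if_neg (show ¬ m + 2 + 1 ≤ m + 2 by omega),
      if_pos (show m + 2 + 1 ≤ m + 3 by omega), if_neg (show m + 2 ≠ 0 by omega),
      if_pos (show m + 2 ≤ m + 2 by omega)]
    exact reluLayer_differenceLayer (m + 1) ha hb i
  · simp only [multWeight, multShift, multState, if_neg (show m + 3 + 1 ≠ 0 by omega),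
      if_neg (show m + 3 + 1 ≠ 1 by omega), if_neg (show ¬ m + 3 + 1 ≤ m + 2 by omega),
      if_neg (show m + 3 + 1 ≠ m + 3 by omega), if_neg (show ¬ m + 3 + 1 ≤ m + 3 by omega),
      if_neg (show m + 3 ≠ 0 by omega), if_neg (show ¬ m + 3 ≤ m + 2 by omega)]
    exact reluLayer_outputLayer _ i

def multNet (z : Fin 2 → ℝ) (j : Fin 1) : ℝ :=
  netEval (multWidth m) (fun l i j => multWeight m l i j) (fun l i => multShift m l i) (m + 4)
    (fun i => z (Fin.cast rfl i)) (Fin.cast (multWidth_last m).symm j)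

lemma multNet_mem : multNet m ∈ NetClassF (m + 4) 2 1 (multWidth m) :=
  ⟨rfl, multWidth_last m, _, _,
    ⟨fun l _ i j => abs_multWeight_le_one m l i j, fun l _ _ i => abs_multShift_le_one m l i⟩,
    fun _ => rfl⟩

lemma multNet_apply (x y : ℝ) :
    multNet m ![x, y] 0 =
      diffSqApprox (m + 2) (clip (x / 2 + y / 2)) (clipAbs (x / 2 - y / 2)) := by
  have hinput : (fun i : Fin (multWidth m 0) => ![x, y] (Fin.cast rfl i)) =
      fun i : Fin (multWidth m 0) => natVec ![x, y] i := by
    funext i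
    rw [natVec, dif_pos (show (i : ℕ) < 2 from i.2)]
    rfl
  rw [multNet, hinput, netEval_eq_of_layers (v := multShift m) (s := multState m x y)]
  · simp [multState, natVec]
  · intro i hi
    rw [multWidth_of_ne m (by omega) (by omega)] at hi
    exact linLayer_firstLayer x y hi
  · intro l hl i hi
    exact multState_succ m x y hl hi

lemma multNet_mem_Icc (x y : ℝ) : multNet m ![x, y] 0 ∈ Icc (0 : ℝ) 1 := by
  rw [multNet_apply]
  exact diffSqApprox_mem_Icc _ (clip_mem_Icc _) (clipAbs_mem_Icc _)

lemma abs_multNet_sub_mul_le {x y : ℝ} (hx : x ∈ Icc (0 : ℝ) 1) (hy : y ∈ Icc (0 : ℝ) 1) :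
    |multNet m ![x, y] 0 - x * y| ≤ (1 / 4) ^ (m + 3) := by
  obtain ⟨hx₀, hx₁⟩ := hx
  obtain ⟨hy₀, hy₁⟩ := hy
  have hs : x / 2 + y / 2 ∈ Icc (0 : ℝ) 1 := ⟨by linarith, by linarith⟩
  have hd : |x / 2 - y / 2| ≤ 1 := abs_le.2 ⟨by linarith, by linarith⟩
  have hds : |x / 2 - y / 2| ≤ x / 2 + y / 2 := abs_le.2 ⟨by linarith, by linarith⟩
  have hxy : x * y = (x / 2 + y / 2) ^ 2 - |x / 2 - y / 2| ^ 2 := by rw [sq_abs]; ring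
  rw [multNet_apply, clip_of_mem_Icc hs, clipAbs_of_abs_le_one hd, hxy]
  exact abs_diffSqApprox_sub_le _ hs ⟨abs_nonneg _, hd⟩ hds

lemma multNet_zero_left (y : ℝ) : multNet m ![0, y] 0 = 0 := by
  rw [multNet_apply, zero_div, zero_add, zero_sub, clipAbs_neg]
  exact diffSqApprox_eq_zero _ (clipAbs_mem_Icc _) (clip_eq_clipAbs_or_eq_zero _)

lemma multNet_zero_right (x : ℝ) : multNet m ![x, 0] 0 = 0 := by
  rw [multNet_apply, zero_div, add_zero, sub_zero]
  exact diffSqApprox_eq_zero _ (clipAbs_mem_Icc _) (clip_eq_clipAbs_or_eq_zero _)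

end Network

lemma quarter_pow_add_three_le (m : ℕ) : (1 / 4 : ℝ) ^ (m + 3) ≤ 2 ^ (-(m : ℤ)) := by
  rw [zpow_neg, zpow_natCast, ← inv_pow, ← one_div]
  calc (1 / 4 : ℝ) ^ (m + 3) ≤ (1 / 4) ^ m :=
        pow_le_pow_of_le_one (by norm_num) (by norm_num) (by omega)
    _ ≤ (1 / 2) ^ m := pow_le_pow_left₀ (by norm_num) (by norm_num) m

end

end MultNet

open MultNet

theorem mult_network_general (m : ℕ) :
    ∃ f ∈ NetClassF (m + 4) 2 1 (fun l => if l = 0 then 2 else if l = m + 5 then 1 else 6),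
      (∀ x ∈ Set.Icc (0:ℝ) 1, ∀ y ∈ Set.Icc (0:ℝ) 1,
        f ![x, y] 0 ∈ Set.Icc (0:ℝ) 1 ∧ |f ![x, y] 0 - x * y| ≤ (2:ℝ) ^ (-(m:ℤ))) ∧
      (∀ x y : ℝ, f ![0, y] 0 = 0 ∧ f ![x, 0] 0 = 0) :=
  ⟨multNet m, multNet_mem m,
    fun x hx y hy => ⟨multNet_mem_Icc m x y,
      (abs_multNet_sub_mul_le m hx hy).trans (quarter_pow_add_three_le m)⟩,
    fun x y => ⟨multNet_zero_left m y, multNet_zero_right m x⟩⟩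

/-- Multiplication network: for every positive integer `m` there is a ReLU network
`Mult_m ∈ ℱ(m+4, (2, 6, …, 6, 1))` with `Mult_m(x,y) ∈ [0,1]` and
`|Mult_m(x,y) − xy| ≤ 2^{−m}` for all `x, y ∈ [0,1]`, and
`Mult_m(0, y) = Mult_m(x, 0) = 0` for all `x, y`. -/
theorem mult_network (m : ℕ) (hm : 1 ≤ m) :
    ∃ f ∈ NetClassF (m + 4) 2 1 (fun l => if l = 0 then 2 else if l = m + 5 then 1 else 6),
      (∀ x ∈ Set.Icc (0:ℝ) 1, ∀ y ∈ Set.Icc (0:ℝ) 1,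
        f ![x, y] 0 ∈ Set.Icc (0:ℝ) 1 ∧ |f ![x, y] 0 - x * y| ≤ (2:ℝ) ^ (-(m:ℤ))) ∧
      (∀ x y : ℝ, f ![0, y] 0 = 0 ∧ f ![x, 0] 0 = 0) :=
  mult_network_general m
end
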